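/- arXiv:2106.09867 — 4 statements merged into one kernel-verified Lean document; each statement's English description precedes it below -/
import Mathlib

section
/- Let p₁ = (r₁e^{iα₁}, s₁e^{iβ₁}) and p₂ = (r₂e^{iα₂}, s₂e^{iβ₂}) be points of ℂ², where r₁,r₂,s₁,s₂ ≥ 0 and α₁,α₂,β₁,β₂ ∈ ℝ. If |α₁ − α₂| ≤ π and |β₁ − β₂| ≤ π, then |r₁ − r₂| + |s₁ − s₂| + min{r₁,r₂}·|α₁ − α₂| + min{s₁,s₂}·|β₁ − β₂| ≤ 3·|p₁ − p₂|, where |p₁ − p₂| denotes the Euclidean distance in ℂ² ≅ ℝ⁴. -/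
open Real Complex

lemma absSq_aux (r₁ r₂ α₁ α₂ : ℝ) : ‖(r₁ : ℂ) * Complex.exp (α₁ * Complex.I)
            - (r₂ : ℂ) * Complex.exp (α₂ * Complex.I)‖ ^ 2
    = r₁^2 + r₂^2 - 2*r₁*r₂*Real.cos (α₁-α₂) := by
  rw [Complex.sq_norm]
  simp [Complex.normSq_apply, Complex.exp_mul_I, Real.cos_sub,
    Complex.cos_ofReal_re, Complex.sin_ofReal_re]
  linear_combination r₁^2 * Real.sin_sq_add_cos_sq α₁ + r₂^2 * Real.sin_sq_add_cos_sq α₂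

lemma key_aux (r₁ r₂ θ : ℝ) (hr₁ : 0 ≤ r₁) (hr₂ : 0 ≤ r₂) (hθ0 : 0 ≤ θ) (hθ : θ ≤ π) :
    (|r₁ - r₂| + min r₁ r₂ * θ)^2 ≤ (1 + π^2/4) * (r₁^2 + r₂^2 - 2*r₁*r₂*Real.cos θ) := by
  have hπ : 0 < π := Real.pi_pos
  have hsin : θ/π ≤ Real.sin (θ/2) := by
    have h := Real.mul_le_sin (x := θ/2) (by linarith) (by linarith)
    have he : θ/π = 2/π * (θ/2) := by
      field_simp
    linarith [he ▸ h]
  have hcos : Real.cos θ = 1 - 2 * Real.sin (θ/2)^2 := by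
    have h := Real.cos_two_mul (θ/2)
    rw [show 2*(θ/2) = θ by ring] at h
    linarith [Real.sin_sq_add_cos_sq (θ/2)]
  have h1 : 2*(θ/π)^2 ≤ 1 - Real.cos θ := by
    have hs0 : 0 ≤ θ/π := by positivity
    nlinarith [hsin]
  have h1' : 2*θ^2 ≤ π^2 * (1 - Real.cos θ) := by
    have h := mul_le_mul_of_nonneg_left h1 (le_of_lt (by positivity : (0:ℝ) < π^2))
    have he : π^2 * (2*(θ/π)^2) = 2*θ^2 := by field_simp
    linarith [he ▸ h]
  set m := min r₁ r₂ with hm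
  have hm0 : 0 ≤ m := le_min hr₁ hr₂
  have hmm : m^2 ≤ r₁ * r₂ := by
    have h₁ : m ≤ r₁ := min_le_left _ _
    have h₂ : m ≤ r₂ := min_le_right _ _
    nlinarith
  have ha : |r₁ - r₂|^2 = (r₁ - r₂)^2 := _root_.sq_abs _
  have ha0 : 0 ≤ |r₁ - r₂| := abs_nonneg _
  have hcos1 : Real.cos θ ≤ 1 := Real.cos_le_one θ
  set a := |r₁ - r₂|
  set X := 2*r₁*r₂*(1 - Real.cos θ) with hX
  have hX0 : 0 ≤ X := by
    have : 0 ≤ 1 - Real.cos θ := by linarith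
    have := mul_nonneg (mul_nonneg (mul_nonneg (by norm_num : (0:ℝ) ≤ 2) hr₁) hr₂) this
    linarith [hX ▸ this]
  have hD : 4*(m*θ)^2 ≤ π^2 * X := by
    nlinarith [mul_le_mul_of_nonneg_left h1' (mul_nonneg hr₁ hr₂),
      mul_le_mul_of_nonneg_right hmm (mul_nonneg hθ0 hθ0)]
  have hcross : 8*π^2*(a*(m*θ)) ≤ π^4*a^2 + 16*(m*θ)^2 := by
    nlinarith [sq_nonneg (π^2*a - 4*(m*θ))]
  have e2 : 4*π^2*(m*θ)^2 ≤ π^4 * X := by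
    have := mul_le_mul_of_nonneg_left hD (sq_nonneg π)
    nlinarith [this]
  have hG : 4*π^2*(a + m*θ)^2 ≤ 4*π^2*((1 + π^2/4) * ((r₁-r₂)^2 + X)) := by
    calc 4*π^2*(a + m*θ)^2 = 4*π^2*a^2 + 8*π^2*(a*(m*θ)) + 4*π^2*(m*θ)^2 := by ring
    _ ≤ 4*π^2*a^2 + (π^4*a^2 + 16*(m*θ)^2) + 4*π^2*(m*θ)^2 := by linarith
    _ ≤ 4*π^2*a^2 + π^4*a^2 + 4*(π^2*X) + π^4*X := by linarith
    _ = 4*π^2*((1 + π^2/4) * ((r₁-r₂)^2 + X)) := by rw [← ha]; ring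
  have h4π : (0:ℝ) < 4*π^2 := by positivity
  have := le_of_mul_le_mul_left hG h4π
  have he : r₁^2 + r₂^2 - 2*r₁*r₂*Real.cos θ = (r₁-r₂)^2 + X := by rw [hX]; ring
  linarith [he ▸ this]

/-- **Distance in ℂ²** (Lemma 2.2). For points `pⱼ = (rⱼ e^{iαⱼ}, sⱼ e^{iβⱼ})` of `ℂ²`
with nonnegative moduli, if `|α₁ - α₂| ≤ π` and `|β₁ - β₂| ≤ π` then
`|r₁ - r₂| + |s₁ - s₂| + min{r₁,r₂}|α₁ - α₂| + min{s₁,s₂}|β₁ - β₂| ≤ 3 |p₁ - p₂|`,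
where `|p₁ - p₂|` is the Euclidean distance in `ℂ² ≅ ℝ⁴`. -/
theorem distance_in_C2 (r₁ r₂ s₁ s₂ α₁ α₂ β₁ β₂ : ℝ)
    (hr₁ : 0 ≤ r₁) (hr₂ : 0 ≤ r₂) (hs₁ : 0 ≤ s₁) (hs₂ : 0 ≤ s₂)
    (hα : |α₁ - α₂| ≤ π) (hβ : |β₁ - β₂| ≤ π) :
    |r₁ - r₂| + |s₁ - s₂| + min r₁ r₂ * |α₁ - α₂| + min s₁ s₂ * |β₁ - β₂| ≤
      3 * Real.sqrt
        (‖(r₁ : ℂ) * Complex.exp (α₁ * Complex.I)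
            - (r₂ : ℂ) * Complex.exp (α₂ * Complex.I)‖ ^ 2
          + ‖(s₁ : ℂ) * Complex.exp (β₁ * Complex.I)
            - (s₂ : ℂ) * Complex.exp (β₂ * Complex.I)‖ ^ 2) := by
  have hAe := absSq_aux r₁ r₂ α₁ α₂
  have hBe := absSq_aux s₁ s₂ β₁ β₂
  rw [hAe, hBe]
  set A := r₁^2 + r₂^2 - 2*r₁*r₂*Real.cos (α₁-α₂) with hA
  set B := s₁^2 + s₂^2 - 2*s₁*s₂*Real.cos (β₁-β₂) with hB
  have hA0 : 0 ≤ A := hAe ▸ sq_nonneg _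
  have hB0 : 0 ≤ B := hBe ▸ sq_nonneg _
  have kA : (|r₁ - r₂| + min r₁ r₂ * |α₁-α₂|)^2 ≤ (1 + π^2/4) * A := by
    have := key_aux r₁ r₂ |α₁-α₂| hr₁ hr₂ (abs_nonneg _) hα
    rwa [Real.cos_abs] at this
  have kB : (|s₁ - s₂| + min s₁ s₂ * |β₁-β₂|)^2 ≤ (1 + π^2/4) * B := by
    have := key_aux s₁ s₂ |β₁-β₂| hs₁ hs₂ (abs_nonneg _) hβ
    rwa [Real.cos_abs] at this
  set L₁ := |r₁ - r₂| + min r₁ r₂ * |α₁-α₂| with hL1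
  set L₂ := |s₁ - s₂| + min s₁ s₂ * |β₁-β₂| with hL2
  have hL10 : 0 ≤ L₁ := add_nonneg (abs_nonneg _) (mul_nonneg (le_min hr₁ hr₂) (abs_nonneg _))
  have hL20 : 0 ≤ L₂ := add_nonneg (abs_nonneg _) (mul_nonneg (le_min hs₁ hs₂) (abs_nonneg _))
  have hπ2 : π^2 ≤ 10 := by nlinarith [Real.pi_lt_d2, Real.pi_pos]
  have h9 : (L₁ + L₂)^2 ≤ 9 * (A + B) := by
    nlinarith [sq_nonneg (L₁ - L₂), kA, kB, hA0, hB0]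
  have hs := Real.sqrt_le_sqrt h9
  rw [Real.sqrt_sq (by linarith)] at hs
  have heq : Real.sqrt (9 * (A + B)) = 3 * Real.sqrt (A + B) := by
    rw [show (9:ℝ)*(A+B) = 3^2*(A+B) by norm_num, Real.sqrt_mul (by positivity),
      Real.sqrt_sq (by norm_num)]
  rw [heq] at hs
  linarith
end

section
/- Let 𝕋_∞ = {(z,w) ∈ ℂ² : |z| < |w|} be the infinite Hartogs triangle. For every point p = (z,w) ∈ 𝕋_∞, the Euclidean distance from p to the boundary b𝕋_∞ equals (|w| − |z|)/√2. -/
open MeasureTheory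

noncomputable section

/-- `ℂ² ≅ ℝ⁴` with the Euclidean norm. -/
abbrev E4 := EuclideanSpace ℝ (Fin 4)

/-- The first complex coordinate of a point of `ℝ⁴ ≅ ℂ²`. -/
def zCoord (x : E4) : ℂ := (x 0 : ℂ) + (x 1 : ℂ) * Complex.I

/-- The second complex coordinate of a point of `ℝ⁴ ≅ ℂ²`. -/
def wCoord (x : E4) : ℂ := (x 2 : ℂ) + (x 3 : ℂ) * Complex.I

/-- The infinite Hartogs triangle `𝕋_∞ = {(z,w) ∈ ℂ² : |z| < |w|}`. -/
def HartogsInf : Set E4 := {x | ‖zCoord x‖ < ‖wCoord x‖}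

lemma continuous_zCoord : Continuous zCoord := by unfold zCoord; fun_prop

lemma continuous_wCoord : Continuous wCoord := by unfold wCoord; fun_prop

lemma isOpen_HartogsInf : IsOpen HartogsInf :=
  isOpen_lt (continuous_norm.comp continuous_zCoord)
    (continuous_norm.comp continuous_wCoord)

lemma frontier_subset_hartogs :
    frontier HartogsInf ⊆ {x : E4 | ‖zCoord x‖ = ‖wCoord x‖} :=
  frontier_lt_subset_eq (continuous_norm.comp continuous_zCoord)
    (continuous_norm.comp continuous_wCoord)

lemma dist_sq_formula (x y : E4) :
    dist x y ^ 2
      = ‖zCoord x - zCoord y‖ ^ 2 + ‖wCoord x - wCoord y‖ ^ 2 := by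
  rw [EuclideanSpace.dist_eq, Real.sq_sqrt (by positivity)]
  simp [Fin.sum_univ_four, Real.dist_eq, sq_abs, Complex.sq_norm, Complex.normSq_apply,
    zCoord, wCoord]
  ring

/-- Points with `|z| = |w| ≠ 0` lie in the closure of the Hartogs triangle. -/
lemma mem_closure_hartogs (ζ ω : ℂ) (h : ‖ζ‖ = ‖ω‖)
    (hω : 0 < ‖ω‖) :
    ((WithLp.equiv 2 (Fin 4 → ℝ)).symm ![ζ.re, ζ.im, ω.re, ω.im] : E4) ∈ closure HartogsInf := by
  set q : E4 := (WithLp.equiv 2 (Fin 4 → ℝ)).symm ![ζ.re, ζ.im, ω.re, ω.im] with hqdef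
  set v : E4 := (WithLp.equiv 2 (Fin 4 → ℝ)).symm ![ζ.re, ζ.im, 0, 0] with hvdef
  set g : ℝ → E4 := fun s => q + (s - 1) • v with hgdef
  have hgz : ∀ s : ℝ, zCoord (g s) = (s : ℂ) * ζ := by
    intro s
    show ((ζ.re + (s-1) * ζ.re : ℝ) : ℂ) + ((ζ.im + (s-1) * ζ.im : ℝ) : ℂ) * Complex.I = _
    apply Complex.ext <;> simp <;> ring
  have hgw : ∀ s : ℝ, wCoord (g s) = ω := by
    intro s
    show ((ω.re + (s-1) * 0 : ℝ) : ℂ) + ((ω.im + (s-1) * 0 : ℝ) : ℂ) * Complex.I = _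
    simpa using Complex.re_add_im ω
  have hcont : Continuous g := by fun_prop
  have htend : Filter.Tendsto g (nhdsWithin 1 (Set.Iio 1)) (nhds q) := by
    have h1 : g 1 = q := by simp [hgdef]
    exact h1 ▸ ((hcont.tendsto 1).mono_left (nhdsWithin_le_nhds (s := Set.Iio 1)))
  refine mem_closure_of_tendsto htend ?_
  filter_upwards [Ioo_mem_nhdsLT_of_mem (by norm_num : (1:ℝ) ∈ Set.Ioc 0 1)] with s hs
  show ‖zCoord (g s)‖ < ‖wCoord (g s)‖
  rw [hgz, hgw, norm_mul, Complex.norm_real, Real.norm_eq_abs, abs_of_pos hs.1, h]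
  exact mul_lt_of_lt_one_left hω hs.2

/-- For every `p = (z,w)` in the infinite Hartogs triangle `𝕋_∞`, the Euclidean distance
from `p` to the boundary `b𝕋_∞` equals `(|w| - |z|)/√2`. -/
theorem dist_to_boundary_hartogsInf (p : E4) (hp : p ∈ HartogsInf) :
    Metric.infDist p (frontier HartogsInf) =
      (‖wCoord p‖ - ‖zCoord p‖) / Real.sqrt 2 := by
  set a : ℝ := ‖zCoord p‖ with hadef
  set b : ℝ := ‖wCoord p‖ with hbdef
  have hab : a < b := hp
  have ha : 0 ≤ a := norm_nonneg _
  have hb : 0 < b := lt_of_le_of_lt ha hab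
  set t : ℝ := (a + b) / 2 with htdef
  have ht : 0 < t := by positivity
  have hta : a ≤ t := by simp only [htdef]; linarith
  have htb : t ≤ b := by simp only [htdef]; linarith
  -- the closest boundary point
  set ζ : ℂ := if zCoord p = 0 then (t : ℂ) else ((t / a : ℝ) : ℂ) * zCoord p with hζdef
  set ω : ℂ := ((t / b : ℝ) : ℂ) * wCoord p with hωdef
  have habsζ : ‖ζ‖ = t := by
    rw [hζdef]
    split_ifs with h
    · rw [Complex.norm_real, Real.norm_eq_abs, abs_of_pos ht]
    · have ha' : 0 < a := by
        rcases lt_or_eq_of_le ha with h' | h'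
        · exact h'
        · exact absurd (norm_eq_zero.mp h'.symm) h
      rw [norm_mul, Complex.norm_real, Real.norm_eq_abs, ← hadef, abs_of_pos (by positivity)]
      field_simp
  have habsω : ‖ω‖ = t := by
    rw [hωdef, norm_mul, Complex.norm_real, Real.norm_eq_abs, ← hbdef, abs_of_pos (by positivity)]
    field_simp
  have habsζsub : ‖zCoord p - ζ‖ = t - a := by
    rw [hζdef]
    split_ifs with h
    · have ha0 : a = 0 := by rw [hadef, h]; simp
      rw [h, zero_sub, norm_neg, Complex.norm_real, Real.norm_eq_abs, abs_of_pos ht, ha0, sub_zero]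
    · have ha' : 0 < a := by
        rcases lt_or_eq_of_le ha with h' | h'
        · exact h'
        · exact absurd (norm_eq_zero.mp h'.symm) h
      have : zCoord p - ((t / a : ℝ) : ℂ) * zCoord p = ((1 - t / a : ℝ) : ℂ) * zCoord p := by
        push_cast; ring
      rw [this, norm_mul, Complex.norm_real, Real.norm_eq_abs, ← hadef]
      have h1 : |1 - t / a| = t / a - 1 := by
        rw [abs_of_nonpos (by rw [sub_nonpos]; exact (le_div_iff₀ ha').mpr (by linarith))]
        ring
      rw [h1]
      field_simp
  have habsωsub : ‖wCoord p - ω‖ = b - t := by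
    have : wCoord p - ((t / b : ℝ) : ℂ) * wCoord p = ((1 - t / b : ℝ) : ℂ) * wCoord p := by
      push_cast; ring
    rw [hωdef, this, norm_mul, Complex.norm_real, Real.norm_eq_abs, ← hbdef]
    have h1 : |1 - t / b| = 1 - t / b := by
      rw [abs_of_nonneg (by rw [sub_nonneg]; exact (div_le_one hb).mpr htb)]
    rw [h1]
    field_simp
  set q : E4 := (WithLp.equiv 2 (Fin 4 → ℝ)).symm ![ζ.re, ζ.im, ω.re, ω.im] with hqdef
  have hqz : zCoord q = ζ := Complex.re_add_im ζ
  have hqw : wCoord q = ω := Complex.re_add_im ω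
  have hqfront : q ∈ frontier HartogsInf := by
    rw [isOpen_HartogsInf.frontier_eq, Set.mem_diff]
    constructor
    · exact mem_closure_hartogs ζ ω (by rw [habsζ, habsω]) (by rw [habsω]; exact ht)
    · show ¬ (‖zCoord q‖ < ‖wCoord q‖)
      rw [hqz, hqw, habsζ, habsω]
      exact lt_irrefl t
  have hdistpq : dist p q = (b - a) / Real.sqrt 2 := by
    have hsq : dist p q ^ 2 = ((b - a) / Real.sqrt 2) ^ 2 := by
      rw [dist_sq_formula, hqz, hqw, habsζsub, habsωsub, div_pow,
        Real.sq_sqrt (by norm_num : (2:ℝ) ≥ 0)]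
      rw [htdef]; ring
    have h1 : dist p q = Real.sqrt (dist p q ^ 2) := (Real.sqrt_sq dist_nonneg).symm
    rw [h1, hsq, Real.sqrt_sq (div_nonneg (by linarith) (Real.sqrt_nonneg 2))]
  apply le_antisymm
  · calc Metric.infDist p (frontier HartogsInf) ≤ dist p q :=
          Metric.infDist_le_dist_of_mem hqfront
      _ = (b - a) / Real.sqrt 2 := hdistpq
  · refine le_of_not_gt fun hlt => ?_
    obtain ⟨q', hq', hdlt⟩ := (Metric.infDist_lt_iff ⟨q, hqfront⟩).mp hlt
    refine absurd hdlt (not_lt.mpr ?_)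
    have ht' : ‖zCoord q'‖ = ‖wCoord q'‖ := frontier_subset_hartogs hq'
    set x : ℝ := ‖zCoord p - zCoord q'‖ with hxdef
    set y : ℝ := ‖wCoord p - wCoord q'‖ with hydef
    have hx : ‖zCoord q'‖ - a ≤ x := by
      have h1 := norm_sub_norm_le (zCoord q') (zCoord p)
      rw [norm_sub_rev] at h1
      exact h1
    have hy : b - ‖wCoord q'‖ ≤ y := by
      have h1 := norm_sub_norm_le (wCoord p) (wCoord q')
      simpa using h1
    have hxy : b - a ≤ x + y := by rw [ht'] at hx; linarith
    have hx0 : 0 ≤ x := norm_nonneg _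
    have hy0 : 0 ≤ y := norm_nonneg _
    have hsq : ((b - a) / Real.sqrt 2) ^ 2 ≤ dist p q' ^ 2 := by
      rw [dist_sq_formula, ← hxdef, ← hydef, div_pow, Real.sq_sqrt (by norm_num : (2:ℝ) ≥ 0)]
      nlinarith [sq_nonneg (x - y)]
    calc (b - a) / Real.sqrt 2
        = Real.sqrt (((b - a) / Real.sqrt 2) ^ 2) :=
          (Real.sqrt_sq (div_nonneg (by linarith) (Real.sqrt_nonneg 2))).symm
      _ ≤ Real.sqrt (dist p q' ^ 2) := Real.sqrt_le_sqrt hsq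
      _ = dist p q' := Real.sqrt_sq dist_nonneg
end
end

section
/- The infinite Hartogs triangle 𝕋_∞ = {(z,w) ∈ ℂ² : |z| < |w|} is a uniform domain: there is a constant c > 0 (one may take c = 12) such that every pair of distinct points p₁, p₂ ∈ 𝕋_∞ can be joined by a rectifiable curve γ contained in 𝕋_∞ with length ℓ(γ) ≤ c|p₁ − p₂| and with min{|p − p₁|, |p − p₂|} ≤ c·dist(p, b𝕋_∞) for every point p on γ. -/
open MeasureTheory Set

noncomputable section

/-- Compatibility: the complex absolute value as a bundled absolute value. -/
def Complex.abs : AbsoluteValue ℂ ℝ where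
  toFun := fun z => ‖z‖
  map_mul' := norm_mul
  nonneg' := norm_nonneg
  eq_zero' _ := norm_eq_zero
  add_le' := norm_add_le

lemma Complex.abs_apply (z : ℂ) : Complex.abs z = ‖z‖ := rfl

lemma Complex.abs_ofReal (r : ℝ) : Complex.abs (r : ℂ) = |r| := Complex.norm_real r

lemma Complex.sq_abs (z : ℂ) : Complex.abs z ^ 2 = Complex.normSq z := Complex.sq_norm z

lemma Complex.continuous_abs : Continuous (fun z : ℂ => Complex.abs z) := continuous_norm

lemma Complex.abs_add_mul_I (x y : ℝ) :
    Complex.abs ((x : ℂ) + (y : ℂ) * Complex.I) = Real.sqrt (x ^ 2 + y ^ 2) :=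
  Complex.norm_add_mul_I x y

lemma Complex.abs_exp_ofReal_mul_I (x : ℝ) : Complex.abs (Complex.exp ((x : ℂ) * Complex.I)) = 1 :=
  Complex.norm_exp_ofReal_mul_I x

lemma Complex.abs_mul_exp_arg_mul_I (x : ℂ) :
    ((Complex.abs x : ℝ) : ℂ) * Complex.exp ((Complex.arg x : ℂ) * Complex.I) = x :=
  Complex.norm_mul_exp_arg_mul_I x

namespace HartogsAux

/-- Build a point of `E4` from two complex numbers. -/
def mk4 (z w : ℂ) : E4 := (WithLp.equiv 2 (Fin 4 → ℝ)).symm ![z.re, z.im, w.re, w.im]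

@[simp] lemma mk4_apply_zero (z w : ℂ) : mk4 z w 0 = z.re := rfl
@[simp] lemma mk4_apply_one (z w : ℂ) : mk4 z w 1 = z.im := rfl
@[simp] lemma mk4_apply_two (z w : ℂ) : mk4 z w 2 = w.re := rfl
@[simp] lemma mk4_apply_three (z w : ℂ) : mk4 z w 3 = w.im := rfl

@[simp] lemma zCoord_mk4 (z w : ℂ) : zCoord (mk4 z w) = z := by
  simp [zCoord, Complex.ext_iff]

@[simp] lemma wCoord_mk4 (z w : ℂ) : wCoord (mk4 z w) = w := by
  simp [wCoord, Complex.ext_iff]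

lemma mk4_eta (x : E4) : mk4 (zCoord x) (wCoord x) = x := by
  ext i
  fin_cases i <;> simp [mk4, zCoord, wCoord]

lemma dist_coords (x y : E4) :
    dist x y = Real.sqrt (Complex.abs (zCoord x - zCoord y) ^ 2
      + Complex.abs (wCoord x - wCoord y) ^ 2) := by
  rw [EuclideanSpace.dist_eq]
  congr 1
  have h : ∀ i : Fin 4, dist (x i) (y i) ^ 2 = (x i - y i) ^ 2 := fun i => by
    rw [Real.dist_eq, sq_abs]
  rw [Fin.sum_univ_four, h, h, h, h, Complex.sq_abs, Complex.sq_abs]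
  simp only [zCoord, wCoord, Complex.normSq_apply, Complex.sub_re, Complex.sub_im,
    Complex.add_re, Complex.add_im, Complex.mul_re, Complex.mul_im, Complex.I_re,
    Complex.I_im, Complex.ofReal_re, Complex.ofReal_im]
  ring

lemma abs_zCoord_sub_le (x y : E4) :
    Complex.abs (zCoord x - zCoord y) ≤ dist x y := by
  rw [dist_coords]
  calc Complex.abs (zCoord x - zCoord y)
      = Real.sqrt (Complex.abs (zCoord x - zCoord y) ^ 2) :=
        (Real.sqrt_sq (Complex.abs.nonneg _)).symm
    _ ≤ _ := Real.sqrt_le_sqrt (by nlinarith [Complex.abs.nonneg (wCoord x - wCoord y)])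

lemma abs_wCoord_sub_le (x y : E4) :
    Complex.abs (wCoord x - wCoord y) ≤ dist x y := by
  rw [dist_coords]
  calc Complex.abs (wCoord x - wCoord y)
      = Real.sqrt (Complex.abs (wCoord x - wCoord y) ^ 2) :=
        (Real.sqrt_sq (Complex.abs.nonneg _)).symm
    _ ≤ _ := Real.sqrt_le_sqrt (by nlinarith [Complex.abs.nonneg (zCoord x - zCoord y)])

lemma dist_le_abs_add (x y : E4) :
    dist x y ≤ Complex.abs (zCoord x - zCoord y) + Complex.abs (wCoord x - wCoord y) := by
  rw [dist_coords]
  have h1 := Complex.abs.nonneg (zCoord x - zCoord y)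
  have h2 := Complex.abs.nonneg (wCoord x - wCoord y)
  calc Real.sqrt (Complex.abs (zCoord x - zCoord y) ^ 2
        + Complex.abs (wCoord x - wCoord y) ^ 2)
      ≤ Real.sqrt ((Complex.abs (zCoord x - zCoord y)
          + Complex.abs (wCoord x - wCoord y)) ^ 2) :=
        Real.sqrt_le_sqrt (by nlinarith)
    _ = _ := Real.sqrt_sq (by positivity)

lemma abs_add_le_sqrt2_dist (x y : E4) :
    Complex.abs (zCoord x - zCoord y) + Complex.abs (wCoord x - wCoord y)
      ≤ Real.sqrt 2 * dist x y := by
  rw [dist_coords]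
  have h1 := Complex.abs.nonneg (zCoord x - zCoord y)
  have h2 := Complex.abs.nonneg (wCoord x - wCoord y)
  rw [← Real.sqrt_mul (by norm_num : (0:ℝ) ≤ 2)]
  rw [Real.le_sqrt (by positivity) (by positivity)]
  nlinarith [sq_nonneg (Complex.abs (zCoord x - zCoord y) - Complex.abs (wCoord x - wCoord y))]

lemma continuous_zCoord : Continuous zCoord := by
  apply Continuous.add
  · exact Complex.continuous_ofReal.comp (PiLp.continuous_apply 2 _ (0 : Fin 4))
  · exact (Complex.continuous_ofReal.comp (PiLp.continuous_apply 2 _ (1 : Fin 4))).mul continuous_const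

lemma continuous_wCoord : Continuous wCoord := by
  apply Continuous.add
  · exact Complex.continuous_ofReal.comp (PiLp.continuous_apply 2 _ (2 : Fin 4))
  · exact (Complex.continuous_ofReal.comp (PiLp.continuous_apply 2 _ (3 : Fin 4))).mul continuous_const

lemma continuous_mk4 {f g : ℝ → ℂ} (hf : Continuous f) (hg : Continuous g) :
    Continuous fun t => mk4 (f t) (g t) := by
  have h : Continuous fun t => (![(f t).re, (f t).im, (g t).re, (g t).im] : Fin 4 → ℝ) := by
    apply continuous_pi
    intro i
    fin_cases i <;> simp <;>
      [exact Complex.continuous_re.comp hf; exact Complex.continuous_im.comp hf;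
       exact Complex.continuous_re.comp hg; exact Complex.continuous_im.comp hg]
  exact ((PiLp.continuousLinearEquiv 2 ℝ (fun _ : Fin 4 => ℝ)).symm.continuous).comp h

lemma isOpen_hartogsInf : IsOpen HartogsInf :=
  isOpen_lt (Complex.continuous_abs.comp continuous_zCoord)
    (Complex.continuous_abs.comp continuous_wCoord)

lemma frontier_subset :
    frontier HartogsInf ⊆ {x : E4 | Complex.abs (zCoord x) = Complex.abs (wCoord x)} := by
  intro x hx
  rw [isOpen_hartogsInf.frontier_eq] at hx
  obtain ⟨hcl, hnot⟩ := hx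
  have h1 : Complex.abs (zCoord x) ≤ Complex.abs (wCoord x) := by
    have := closure_lt_subset_le (Complex.continuous_abs.comp continuous_zCoord)
      (Complex.continuous_abs.comp continuous_wCoord)
    exact this hcl
  have h2 : ¬ (Complex.abs (zCoord x) < Complex.abs (wCoord x)) := hnot
  exact le_antisymm h1 (not_lt.1 h2)

lemma zero_mem_frontier : (0 : E4) ∈ frontier HartogsInf := by
  rw [isOpen_hartogsInf.frontier_eq]
  constructor
  · rw [Metric.mem_closure_iff]
    intro ε hε
    refine ⟨mk4 0 ((ε/2 : ℝ) : ℂ), ?_, ?_⟩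
    · show Complex.abs (zCoord _) < Complex.abs (wCoord _)
      simp [Complex.abs_ofReal, abs_of_pos, hε, half_pos hε]
    · have h0 : zCoord (0 : E4) = 0 := by simp [zCoord]
      have h0' : wCoord (0 : E4) = 0 := by simp [wCoord]
      rw [dist_comm, dist_coords, h0, h0']
      simp only [zCoord_mk4, wCoord_mk4, sub_zero]
      rw [Complex.abs_ofReal]
      simp only [map_zero]
      rw [abs_of_pos (half_pos hε)]
      calc Real.sqrt (0 ^ 2 + (ε/2) ^ 2) = ε / 2 := by
            rw [zero_pow (by norm_num), zero_add, Real.sqrt_sq (half_pos hε).le]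
        _ < ε := by linarith
  · show ¬ _
    simp only [HartogsInf, mem_setOf_eq, not_lt]
    have h0 : zCoord (0 : E4) = 0 := by simp [zCoord]
    have h0' : wCoord (0 : E4) = 0 := by simp [wCoord]
    rw [h0, h0']

lemma sub_le_sqrt2_infDist (x : E4) :
    Complex.abs (wCoord x) - Complex.abs (zCoord x)
      ≤ Real.sqrt 2 * Metric.infDist x (frontier HartogsInf) := by
  have hne : (frontier HartogsInf).Nonempty := ⟨0, zero_mem_frontier⟩
  have key : ∀ y ∈ frontier HartogsInf,
      Complex.abs (wCoord x) - Complex.abs (zCoord x) ≤ Real.sqrt 2 * dist x y := by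
    intro y hy
    have hy' : Complex.abs (zCoord y) = Complex.abs (wCoord y) := frontier_subset hy
    have h1 : Complex.abs (wCoord x) - Complex.abs (wCoord y)
        ≤ Complex.abs (wCoord x - wCoord y) := by
      have := Complex.abs.abs_abv_sub_le_abv_sub (wCoord x) (wCoord y)
      have h := abs_le.1 this
      linarith [h.2]
    have h2 : Complex.abs (zCoord y) - Complex.abs (zCoord x)
        ≤ Complex.abs (zCoord x - zCoord y) := by
      have := Complex.abs.abs_abv_sub_le_abv_sub (zCoord y) (zCoord x)
      have h := abs_le.1 this
      rw [abs_sub_comm] at *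
      linarith [h.2, (abs_le.1 (Complex.abs.abs_abv_sub_le_abv_sub (zCoord x) (zCoord y))).1]
    calc Complex.abs (wCoord x) - Complex.abs (zCoord x)
        = (Complex.abs (wCoord x) - Complex.abs (wCoord y))
          + (Complex.abs (zCoord y) - Complex.abs (zCoord x)) := by rw [hy']; ring
      _ ≤ Complex.abs (wCoord x - wCoord y) + Complex.abs (zCoord x - zCoord y) := by
          have h2' : Complex.abs (zCoord y) - Complex.abs (zCoord x)
              ≤ Complex.abs (zCoord x - zCoord y) := by
            have := abs_le.1 (Complex.abs.abs_abv_sub_le_abv_sub (zCoord x) (zCoord y))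
            linarith [this.1]
          linarith
      _ ≤ Real.sqrt 2 * dist x y := by
          have := abs_add_le_sqrt2_dist x y
          linarith
  have hs2 : (0:ℝ) < Real.sqrt 2 := Real.sqrt_pos.2 (by norm_num)
  rw [show Complex.abs (wCoord x) - Complex.abs (zCoord x)
      = Real.sqrt 2 * ((Complex.abs (wCoord x) - Complex.abs (zCoord x)) / Real.sqrt 2) from
      (mul_div_cancel₀ _ hs2.ne').symm]
  apply mul_le_mul_of_nonneg_left _ hs2.le
  rw [Metric.infDist_eq_iInf]
  haveI : Nonempty (frontier HartogsInf) := hne.to_subtype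
  apply le_ciInf
  intro y
  rw [div_le_iff₀ hs2, mul_comm]
  exact key y y.2

lemma abs_exp_mul_I_sub_one (θ : ℝ) :
    Complex.abs (Complex.exp ((θ : ℂ) * Complex.I) - 1) = 2 * |Real.sin (θ / 2)| := by
  have h1 : Complex.exp ((θ : ℂ) * Complex.I) - 1
      = ((Real.cos θ - 1 : ℝ) : ℂ) + ((Real.sin θ : ℝ) : ℂ) * Complex.I := by
    rw [Complex.exp_mul_I]
    push_cast
    ring
  rw [h1, Complex.abs_add_mul_I, Real.abs_sin_half]
  rw [show (Real.cos θ - 1) ^ 2 + Real.sin θ ^ 2 = 2 ^ 2 * ((1 - Real.cos θ) / 2) from by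
    nlinarith [Real.sin_sq_add_cos_sq θ]]
  rw [Real.sqrt_mul (by positivity), Real.sqrt_sq (by norm_num : (0:ℝ) ≤ 2)]

lemma abs_exp_mul_I_sub_one_le (θ : ℝ) :
    Complex.abs (Complex.exp ((θ : ℂ) * Complex.I) - 1) ≤ |θ| := by
  rw [abs_exp_mul_I_sub_one]
  have := Real.abs_sin_le_abs (x := θ / 2)
  rw [abs_div] at this
  simp only [abs_two] at this
  linarith [this]

lemma abs_exp_sub_exp (a b : ℝ) :
    Complex.abs (Complex.exp ((a : ℂ) * Complex.I) - Complex.exp ((b : ℂ) * Complex.I))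
      ≤ |a - b| := by
  have h : Complex.exp ((a : ℂ) * Complex.I) - Complex.exp ((b : ℂ) * Complex.I)
      = Complex.exp ((b : ℂ) * Complex.I)
        * (Complex.exp (((a - b : ℝ) : ℂ) * Complex.I) - 1) := by
    rw [mul_sub, ← Complex.exp_add, mul_one]
    push_cast
    ring_nf
  rw [h, map_mul, Complex.abs_exp_ofReal_mul_I, one_mul]
  exact abs_exp_mul_I_sub_one_le _

lemma jordan {θ : ℝ} (h : |θ| ≤ Real.pi) :
    |θ| ≤ Real.pi / 2 * Complex.abs (Complex.exp ((θ : ℂ) * Complex.I) - 1) := by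
  rw [abs_exp_mul_I_sub_one]
  have hπ : (0:ℝ) < Real.pi := Real.pi_pos
  have h1 : |Real.sin (θ / 2)| = Real.sin (|θ| / 2) := by
    rcases le_or_gt 0 θ with hθ | hθ
    · rw [abs_of_nonneg hθ, abs_of_nonneg]
      exact Real.sin_nonneg_of_nonneg_of_le_pi (by positivity) (by linarith [abs_of_nonneg hθ])
    · rw [abs_of_neg hθ]
      rw [show θ / 2 = -(-θ / 2) from by ring, Real.sin_neg, abs_neg, abs_of_nonneg]
      exact Real.sin_nonneg_of_nonneg_of_le_pi (by linarith)
        (by rw [abs_of_neg hθ] at h; linarith)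
  rw [h1]
  have h2 : 2 / Real.pi * (|θ| / 2) ≤ Real.sin (|θ| / 2) :=
    Real.mul_le_sin (by positivity) (by have := abs_nonneg θ; linarith)
  have h3 : 2 / Real.pi * (|θ| / 2) = |θ| / Real.pi := by field_simp
  rw [h3] at h2
  calc |θ| = Real.pi / 2 * (2 * (|θ| / Real.pi)) := by field_simp
    _ ≤ Real.pi / 2 * (2 * Real.sin (|θ| / 2)) := by
        apply mul_le_mul_of_nonneg_left _ (by positivity)
        linarith

lemma chord_aux (v₁ v₂ : ℂ) :
    Complex.abs ((Complex.abs v₂ : ℂ) * v₁ - (Complex.abs v₁ : ℂ) * v₂)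
      ≤ 2 * Complex.abs v₂ * Complex.abs (v₁ - v₂) := by
  have h : (Complex.abs v₂ : ℂ) * v₁ - (Complex.abs v₁ : ℂ) * v₂
      = (Complex.abs v₂ : ℂ) * (v₁ - v₂) + ((Complex.abs v₂ - Complex.abs v₁ : ℝ) : ℂ) * v₂ := by
    push_cast
    ring
  rw [h]
  calc Complex.abs _ ≤ Complex.abs ((Complex.abs v₂ : ℂ) * (v₁ - v₂))
        + Complex.abs (((Complex.abs v₂ - Complex.abs v₁ : ℝ) : ℂ) * v₂) :=
      Complex.abs.add_le _ _
    _ = Complex.abs v₂ * Complex.abs (v₁ - v₂)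
        + |Complex.abs v₂ - Complex.abs v₁| * Complex.abs v₂ := by
      rw [map_mul, map_mul, Complex.abs_ofReal, Complex.abs_ofReal,
        abs_of_nonneg (Complex.abs.nonneg v₂)]
    _ ≤ Complex.abs v₂ * Complex.abs (v₁ - v₂)
        + Complex.abs (v₁ - v₂) * Complex.abs v₂ := by
      have h1 := Complex.abs.abs_abv_sub_le_abv_sub v₂ v₁
      have h2 : Complex.abs (v₂ - v₁) = Complex.abs (v₁ - v₂) := by
        rw [← Complex.abs.map_neg (v₂ - v₁), neg_sub]
      rw [h2] at h1
      have h3 : |Complex.abs v₂ - Complex.abs v₁| * Complex.abs v₂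
          ≤ Complex.abs (v₁ - v₂) * Complex.abs v₂ :=
        mul_le_mul_of_nonneg_right h1 (Complex.abs.nonneg v₂)
      linarith
    _ = 2 * Complex.abs v₂ * Complex.abs (v₁ - v₂) := by ring

lemma tent_lipschitz (x y : ℝ) : |min x (1-x) - min y (1-y)| ≤ |x - y| := by
  have hxy1 : x - y ≤ |x - y| := le_abs_self _
  have hxy2 : y - x ≤ |x - y| := by rw [abs_sub_comm]; exact le_abs_self _
  rcases le_total x (1-x) with h1 | h1 <;> rcases le_total y (1-y) with h2 | h2
  · rw [min_eq_left h1, min_eq_left h2]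
  · rw [min_eq_left h1, min_eq_right h2, abs_le]; constructor <;> linarith
  · rw [min_eq_right h1, min_eq_left h2, abs_le]; constructor <;> linarith
  · rw [min_eq_right h1, min_eq_right h2, abs_le]; constructor <;> linarith

lemma polar_aux {w₁ w₂ : ℂ} (h₁ : w₁ ≠ 0) (h₂ : w₂ ≠ 0) :
    ((Complex.abs w₂ : ℝ) : ℂ) * (w₁ / (Complex.abs w₁ : ℂ))
      * Complex.exp ((Complex.arg (w₂ / w₁) : ℂ) * Complex.I) = w₂ := by
  have h := Complex.abs_mul_exp_arg_mul_I (w₂ / w₁)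
  rw [map_div₀] at h
  have hb₁ : ((Complex.abs w₁ : ℝ) : ℂ) ≠ 0 :=
    Complex.ofReal_ne_zero.2 (Complex.abs.ne_zero h₁)
  have hb₂ : ((Complex.abs w₂ : ℝ) : ℂ) ≠ 0 :=
    Complex.ofReal_ne_zero.2 (Complex.abs.ne_zero h₂)
  push_cast at h
  field_simp at h ⊢
  linear_combination h

lemma exp_arg_eq {w₁ w₂ : ℂ} (h₁ : w₁ ≠ 0) (h₂ : w₂ ≠ 0) :
    Complex.exp ((Complex.arg (w₂ / w₁) : ℂ) * Complex.I)
      = (w₂ * (Complex.abs w₁ : ℝ)) / (w₁ * (Complex.abs w₂ : ℝ)) := by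
  have h := polar_aux h₁ h₂
  have hb₁ : ((Complex.abs w₁ : ℝ) : ℂ) ≠ 0 :=
    Complex.ofReal_ne_zero.2 (Complex.abs.ne_zero h₁)
  have hb₂ : ((Complex.abs w₂ : ℝ) : ℂ) ≠ 0 :=
    Complex.ofReal_ne_zero.2 (Complex.abs.ne_zero h₂)
  field_simp at h ⊢
  linear_combination h

lemma arg_bounds {w₁ w₂ : ℂ} (h₁ : w₁ ≠ 0) (h₂ : w₂ ≠ 0) :
    Complex.abs w₁ * |Complex.arg (w₂ / w₁)| ≤ Real.pi * Complex.abs (w₁ - w₂) ∧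
    Complex.abs w₂ * |Complex.arg (w₂ / w₁)| ≤ Real.pi * Complex.abs (w₁ - w₂) := by
  have hb₁ : (0:ℝ) < Complex.abs w₁ := Complex.abs.pos h₁
  have hb₂ : (0:ℝ) < Complex.abs w₂ := Complex.abs.pos h₂
  set b₁ := Complex.abs w₁
  set b₂ := Complex.abs w₂
  set φ := Complex.arg (w₂ / w₁) with hφ
  set δ := Complex.abs (w₁ - w₂) with hδ
  set N := Complex.abs (w₂ * (b₁:ℝ) - w₁ * (b₂:ℝ)) with hNdef
  have hδ0 : 0 ≤ δ := Complex.abs.nonneg _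
  have hN0 : 0 ≤ N := Complex.abs.nonneg _
  have hE : Complex.exp ((φ:ℂ) * Complex.I) = (w₂ * (b₁:ℝ)) / (w₁ * (b₂:ℝ)) :=
    exp_arg_eq h₁ h₂
  have hsub : Complex.exp ((φ:ℂ) * Complex.I) - 1
      = (w₂ * (b₁:ℝ) - w₁ * (b₂:ℝ)) / (w₁ * (b₂:ℝ)) := by
    rw [hE, div_sub_one (mul_ne_zero h₁ (Complex.ofReal_ne_zero.2 hb₂.ne'))]
  have hA : Complex.abs (Complex.exp ((φ:ℂ) * Complex.I) - 1) = N / (b₁ * b₂) := by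
    rw [hsub, map_div₀, map_mul, Complex.abs_ofReal, abs_of_pos hb₂]
  have hN₂ : N ≤ 2 * b₂ * δ := by
    have h := chord_aux w₁ w₂
    have heq : N = Complex.abs ((b₂:ℂ) * w₁ - (b₁:ℂ) * w₂) := by
      rw [hNdef, ← Complex.abs.map_neg]; ring_nf
    rw [heq]; exact h
  have hN₁ : N ≤ 2 * b₁ * δ := by
    have h := chord_aux w₂ w₁
    have heq : N = Complex.abs ((b₁:ℂ) * w₂ - (b₂:ℂ) * w₁) := by
      rw [hNdef]; ring_nf
    have hδ' : Complex.abs (w₂ - w₁) = δ := by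
      rw [hδ, ← Complex.abs.map_neg (w₂ - w₁), neg_sub]
    rw [heq]; rw [hδ'] at h; exact h
  have hj : |φ| ≤ Real.pi / 2 * (N / (b₁ * b₂)) := by
    have := jordan (Complex.abs_arg_le_pi (w₂ / w₁))
    rw [hA] at this; exact this
  constructor
  · have h1 : b₁ * |φ| ≤ b₁ * (Real.pi / 2 * (N / (b₁ * b₂))) :=
      mul_le_mul_of_nonneg_left hj hb₁.le
    have h2 : b₁ * (Real.pi / 2 * (N / (b₁ * b₂))) = Real.pi / 2 * (N / b₂) := by
      field_simp
    have h3 : N / b₂ ≤ 2 * δ := by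
      rw [div_le_iff₀ hb₂]; nlinarith
    have h4 : Real.pi / 2 * (N / b₂) ≤ Real.pi / 2 * (2 * δ) :=
      mul_le_mul_of_nonneg_left h3 (by positivity)
    calc b₁ * |φ| ≤ Real.pi / 2 * (N / b₂) := by rw [← h2]; exact h1
      _ ≤ Real.pi / 2 * (2 * δ) := h4
      _ = Real.pi * δ := by ring
  · have h1 : b₂ * |φ| ≤ b₂ * (Real.pi / 2 * (N / (b₁ * b₂))) :=
      mul_le_mul_of_nonneg_left hj hb₂.le
    have h2 : b₂ * (Real.pi / 2 * (N / (b₁ * b₂))) = Real.pi / 2 * (N / b₁) := by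
      field_simp
    have h3 : N / b₁ ≤ 2 * δ := by
      rw [div_le_iff₀ hb₁]; nlinarith
    have h4 : Real.pi / 2 * (N / b₁) ≤ Real.pi / 2 * (2 * δ) :=
      mul_le_mul_of_nonneg_left h3 (by positivity)
    calc b₂ * |φ| ≤ Real.pi / 2 * (N / b₁) := by rw [← h2]; exact h1
      _ ≤ Real.pi / 2 * (2 * δ) := h4
      _ = Real.pi * δ := by ring

end HartogsAux


set_option maxHeartbeats 2000000 in
open HartogsAux in
/-- **The infinite Hartogs triangle is a uniform domain** (Lemma 2.3): there is a constant
`c > 0` (one may take `c = 12`) such that any two distinct points `p₁, p₂ ∈ 𝕋_∞` can be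
joined by a rectifiable curve `γ : [0,1] → 𝕋_∞` with length `ℓ(γ) ≤ c|p₁ - p₂|` and with
`min{|p - p₁|, |p - p₂|} ≤ c · dist(p, b𝕋_∞)` for every point `p` on `γ`. -/
theorem hartogsInf_uniform_domain :
    ∃ c : ℝ, 0 < c ∧ c ≤ 12 ∧
      ∀ p₁ ∈ HartogsInf, ∀ p₂ ∈ HartogsInf, p₁ ≠ p₂ →
        ∃ γ : ℝ → E4,
          ContinuousOn γ (Icc 0 1) ∧
          γ 0 = p₁ ∧ γ 1 = p₂ ∧
          (∀ t ∈ Icc (0:ℝ) 1, γ t ∈ HartogsInf) ∧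
          eVariationOn γ (Icc 0 1) ≤ ENNReal.ofReal (c * dist p₁ p₂) ∧
          ∀ t ∈ Icc (0:ℝ) 1,
            min (dist (γ t) p₁) (dist (γ t) p₂) ≤
              c * Metric.infDist (γ t) (frontier HartogsInf) := by
  refine ⟨12, by norm_num, le_rfl, ?_⟩
  intro p₁ hp₁ p₂ hp₂ hne
  have hp₁' : Complex.abs (zCoord p₁) < Complex.abs (wCoord p₁) := hp₁
  have hp₂' : Complex.abs (zCoord p₂) < Complex.abs (wCoord p₂) := hp₂
  set z₁ := zCoord p₁ with hz₁
  set z₂ := zCoord p₂ with hz₂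
  set w₁ := wCoord p₁ with hw₁
  set w₂ := wCoord p₂ with hw₂
  set b₁ := Complex.abs w₁ with hb₁def
  set b₂ := Complex.abs w₂ with hb₂def
  set d := dist p₁ p₂ with hddef
  have hb₁ : 0 < b₁ := (Complex.abs.nonneg z₁).trans_lt hp₁'
  have hb₂ : 0 < b₂ := (Complex.abs.nonneg z₂).trans_lt hp₂'
  have hw₁0 : w₁ ≠ 0 := by
    intro h; rw [hb₁def, h] at hb₁; simp at hb₁
  have hw₂0 : w₂ ≠ 0 := by
    intro h; rw [hb₂def, h] at hb₂; simp at hb₂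
  have hd : 0 < d := dist_pos.2 hne
  have hdz : Complex.abs (z₁ - z₂) ≤ d := abs_zCoord_sub_le p₁ p₂
  have hδd : Complex.abs (w₁ - w₂) ≤ d := abs_wCoord_sub_le p₁ p₂
  have hΔr : |b₁ - b₂| ≤ d :=
    le_trans (Complex.abs.abs_abv_sub_le_abv_sub w₁ w₂) hδd
  set u := w₁ / ((b₁ : ℝ) : ℂ) with hudef
  set φ := Complex.arg (w₂ / w₁) with hφdef
  have hφπ : |φ| ≤ Real.pi := Complex.abs_arg_le_pi _
  have hφ0 : (0:ℝ) ≤ |φ| := abs_nonneg φ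
  have hargs := arg_bounds hw₁0 hw₂0
  have hφ1 : b₁ * |φ| ≤ Real.pi * d := by
    refine le_trans ?_ (mul_le_mul_of_nonneg_left hδd Real.pi_pos.le)
    rw [hb₁def, hφdef]; exact hargs.1
  have hφ2 : b₂ * |φ| ≤ Real.pi * d := by
    refine le_trans ?_ (mul_le_mul_of_nonneg_left hδd Real.pi_pos.le)
    rw [hb₂def, hφdef]; exact hargs.2
  have hb₁C : ((b₁ : ℝ) : ℂ) ≠ 0 := Complex.ofReal_ne_zero.2 hb₁.ne'
  have hb₂C : ((b₂ : ℝ) : ℂ) ≠ 0 := Complex.ofReal_ne_zero.2 hb₂.ne'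
  have hu1 : Complex.abs u = 1 := by
    rw [hudef, map_div₀, Complex.abs_ofReal, abs_of_pos hb₁, ← hb₁def, div_self hb₁.ne']
  have hw₁u : ((b₁ : ℝ) : ℂ) * u = w₁ := by
    rw [hudef]; field_simp
  -- the curve
  set ρ : ℝ → ℝ := fun t => (1 - t) * b₁ + t * b₂ + 2 * d * min t (1 - t) with hρdef
  set Z : ℝ → ℂ := fun t => ((1 - t : ℝ) : ℂ) * z₁ + ((t : ℝ) : ℂ) * z₂ with hZdef
  set Ee : ℝ → ℂ := fun t => Complex.exp (((φ * t : ℝ) : ℂ) * Complex.I) with hEdef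
  set W : ℝ → ℂ := fun t => ((ρ t : ℝ) : ℂ) * u * Ee t with hWdef
  set γ : ℝ → E4 := fun t => mk4 (Z t) (W t) with hγdef
  have hzγ : ∀ t, zCoord (γ t) = Z t := fun t => by
    rw [hγdef]; exact zCoord_mk4 _ _
  have hwγ : ∀ t, wCoord (γ t) = W t := fun t => by
    rw [hγdef]; exact wCoord_mk4 _ _
  have hw₂u : ((b₂ : ℝ) : ℂ) * u * Ee 1 = w₂ := by
    simp only [hEdef, mul_one, hudef, hb₁def, hb₂def, hφdef]
    exact polar_aux hw₁0 hw₂0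
  -- endpoints
  have hγ0 : γ 0 = p₁ := by
    have hρ0 : ρ 0 = b₁ := by simp [hρdef]
    have hZ0 : Z 0 = z₁ := by simp [hZdef]
    have hE0 : Ee 0 = 1 := by simp [hEdef]
    have hW0 : W 0 = w₁ := by rw [hWdef]; simp only [hρ0, hE0, mul_one]; exact hw₁u
    rw [hγdef]; simp only [hZ0, hW0, hz₁, hw₁]; exact mk4_eta p₁
  have hγ1 : γ 1 = p₂ := by
    have hρ1 : ρ 1 = b₂ := by simp [hρdef]
    have hZ1 : Z 1 = z₂ := by simp [hZdef]
    have hW1 : W 1 = w₂ := by rw [hWdef]; simp only [hρ1]; exact hw₂u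
    rw [hγdef]; simp only [hZ1, hW1, hz₂, hw₂]; exact mk4_eta p₂
  -- bounds on |Z|, |W|
  have habsZ : ∀ t ∈ Icc (0:ℝ) 1,
      Complex.abs (Z t) ≤ (1 - t) * Complex.abs z₁ + t * Complex.abs z₂ := by
    intro t ht
    simp only [hZdef]
    calc Complex.abs (((1 - t : ℝ) : ℂ) * z₁ + ((t : ℝ) : ℂ) * z₂)
        ≤ Complex.abs (((1 - t : ℝ) : ℂ) * z₁) + Complex.abs (((t : ℝ) : ℂ) * z₂) :=
          Complex.abs.add_le _ _
      _ = (1 - t) * Complex.abs z₁ + t * Complex.abs z₂ := by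
          rw [map_mul, map_mul, Complex.abs_ofReal, Complex.abs_ofReal,
            abs_of_nonneg (by linarith [ht.2] : (0:ℝ) ≤ 1 - t), abs_of_nonneg ht.1]
  have hcomb : ∀ t ∈ Icc (0:ℝ) 1,
      (1 - t) * Complex.abs z₁ + t * Complex.abs z₂ < (1 - t) * b₁ + t * b₂ := by
    intro t ht
    rcases lt_or_ge t 1 with h | h
    · have h1 : (1 - t) * Complex.abs z₁ < (1 - t) * b₁ :=
        mul_lt_mul_of_pos_left hp₁' (by linarith)
      have h2 : t * Complex.abs z₂ ≤ t * b₂ := mul_le_mul_of_nonneg_left hp₂'.le ht.1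
      linarith
    · have ht1 : t = 1 := le_antisymm ht.2 h
      rw [ht1]
      have := hp₂'
      nlinarith
  have hmin0 : ∀ t ∈ Icc (0:ℝ) 1, 0 ≤ min t (1 - t) := fun t ht =>
    le_min ht.1 (by linarith [ht.2])
  have hρZ : ∀ t ∈ Icc (0:ℝ) 1, Complex.abs (Z t) + 2 * d * min t (1 - t) < ρ t := by
    intro t ht
    have h1 := habsZ t ht
    have h2 := hcomb t ht
    simp only [hρdef]
    linarith
  have hρpos : ∀ t ∈ Icc (0:ℝ) 1, 0 < ρ t := by
    intro t ht
    have h1 := hρZ t ht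
    have h0 : 0 ≤ Complex.abs (Z t) + 2 * d * min t (1 - t) :=
      add_nonneg (Complex.abs.nonneg _) (mul_nonneg (by positivity) (hmin0 t ht))
    linarith
  have hWabs : ∀ t ∈ Icc (0:ℝ) 1, Complex.abs (W t) = ρ t := by
    intro t ht
    simp only [hWdef, hEdef]
    rw [map_mul, map_mul, Complex.abs_ofReal, hu1, mul_one,
      Complex.abs_exp_ofReal_mul_I, mul_one, abs_of_pos (hρpos t ht)]
  have hmem : ∀ t ∈ Icc (0:ℝ) 1, γ t ∈ HartogsInf := by
    intro t ht
    show Complex.abs (zCoord (γ t)) < Complex.abs (wCoord (γ t))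
    rw [hzγ, hwγ, hWabs t ht]
    have h1 := hρZ t ht
    have h0 : 0 ≤ 2 * d * min t (1 - t) := mul_nonneg (by positivity) (hmin0 t ht)
    linarith
  have hInf : ∀ t ∈ Icc (0:ℝ) 1,
      2 * d * min t (1 - t) ≤ Real.sqrt 2 * Metric.infDist (γ t) (frontier HartogsInf) := by
    intro t ht
    have h := sub_le_sqrt2_infDist (γ t)
    rw [hzγ, hwγ, hWabs t ht] at h
    have h1 := hρZ t ht
    linarith
  -- Lipschitz estimate
  have hρlip : ∀ x y : ℝ, |ρ x - ρ y| ≤ |x - y| * (3 * d) := by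
    intro x y
    simp only [hρdef]
    have h1 : (1 - x) * b₁ + x * b₂ + 2 * d * min x (1 - x)
        - ((1 - y) * b₁ + y * b₂ + 2 * d * min y (1 - y))
        = (x - y) * (b₂ - b₁) + 2 * d * (min x (1 - x) - min y (1 - y)) := by ring
    rw [h1]
    have h2 : |(x - y) * (b₂ - b₁)| ≤ |x - y| * d := by
      rw [abs_mul]
      apply mul_le_mul_of_nonneg_left _ (abs_nonneg _)
      rw [abs_sub_comm]; exact hΔr
    have h3 : |2 * d * (min x (1 - x) - min y (1 - y))| ≤ 2 * d * |x - y| := by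
      rw [abs_mul, abs_of_nonneg (by positivity : (0:ℝ) ≤ 2 * d)]
      exact mul_le_mul_of_nonneg_left (tent_lipschitz x y) (by positivity)
    calc |(x - y) * (b₂ - b₁) + 2 * d * (min x (1 - x) - min y (1 - y))|
        ≤ |(x - y) * (b₂ - b₁)| + |2 * d * (min x (1 - x) - min y (1 - y))| := abs_add_le _ _
      _ ≤ |x - y| * d + 2 * d * |x - y| := by linarith
      _ = |x - y| * (3 * d) := by ring
  have hγlip : ∀ x ∈ Icc (0:ℝ) 1, ∀ y ∈ Icc (0:ℝ) 1,
      dist (γ x) (γ y) ≤ 12 * d * |x - y| := by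
    intro x hx y hy
    have hZxy : Complex.abs (Z x - Z y) ≤ |x - y| * d := by
      have h1 : Z x - Z y = ((x - y : ℝ) : ℂ) * (z₂ - z₁) := by
        simp only [hZdef]; push_cast; ring
      rw [h1, map_mul, Complex.abs_ofReal]
      apply mul_le_mul_of_nonneg_left _ (abs_nonneg _)
      rw [← neg_sub, Complex.abs.map_neg]; exact hdz
    have hExy : Complex.abs (Ee x - Ee y) ≤ |φ| * |x - y| := by
      simp only [hEdef]
      calc Complex.abs _ ≤ |φ * x - φ * y| := abs_exp_sub_exp (φ * x) (φ * y)
        _ = |φ| * |x - y| := by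
            rw [show φ * x - φ * y = φ * (x - y) from by ring, abs_mul]
    have hρy : ρ y ≤ max b₁ b₂ + d := by
      simp only [hρdef]
      have h1 : (1 - y) * b₁ + y * b₂ ≤ max b₁ b₂ := by
        rcases le_total b₁ b₂ with h | h
        · rw [max_eq_right h]; nlinarith [hy.1, hy.2]
        · rw [max_eq_left h]; nlinarith [hy.1, hy.2]
      have h2 : min y (1 - y) ≤ 1 / 2 := by
        rcases le_total y (1/2) with h | h
        · exact le_trans (min_le_left _ _) h
        · exact le_trans (min_le_right _ _) (by linarith)
      nlinarith [hd.le]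
    have hmaxφ : max b₁ b₂ * |φ| ≤ Real.pi * d := by
      rcases le_total b₁ b₂ with h | h
      · rw [max_eq_right h]; exact hφ2
      · rw [max_eq_left h]; exact hφ1
    have hWxy : Complex.abs (W x - W y) ≤ |x - y| * (3 * d) + 2 * Real.pi * d * |x - y| := by
      have h1 : W x - W y
          = u * ((((ρ x - ρ y : ℝ) : ℂ)) * Ee x + ((ρ y : ℝ) : ℂ) * (Ee x - Ee y)) := by
        simp only [hWdef]; push_cast; ring
      rw [h1, map_mul, hu1, one_mul]
      have hEx1 : Complex.abs (Ee x) = 1 := by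
        simp only [hEdef]; exact Complex.abs_exp_ofReal_mul_I _
      have hstep : Complex.abs ((((ρ x - ρ y : ℝ) : ℂ)) * Ee x + ((ρ y : ℝ) : ℂ) * (Ee x - Ee y))
          ≤ |ρ x - ρ y| + ρ y * (|φ| * |x - y|) := by
        calc Complex.abs _
            ≤ Complex.abs ((((ρ x - ρ y : ℝ) : ℂ)) * Ee x)
              + Complex.abs (((ρ y : ℝ) : ℂ) * (Ee x - Ee y)) := Complex.abs.add_le _ _
          _ ≤ |ρ x - ρ y| + ρ y * (|φ| * |x - y|) := by
              rw [map_mul, map_mul, Complex.abs_ofReal, Complex.abs_ofReal, hEx1, mul_one,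
                abs_of_pos (hρpos y hy)]
              have := mul_le_mul_of_nonneg_left hExy (hρpos y hy).le
              linarith
      have hρφ : ρ y * |φ| ≤ 2 * Real.pi * d := by
        have h2 : ρ y * |φ| ≤ (max b₁ b₂ + d) * |φ| := mul_le_mul_of_nonneg_right hρy hφ0
        have h3 : d * |φ| ≤ d * Real.pi := mul_le_mul_of_nonneg_left hφπ hd.le
        nlinarith [hmaxφ]
      have h4 : ρ y * (|φ| * |x - y|) ≤ 2 * Real.pi * d * |x - y| := by
        have := mul_le_mul_of_nonneg_right hρφ (abs_nonneg (x - y))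
        nlinarith [abs_nonneg (x - y), (hρpos y hy).le, hφ0]
      calc Complex.abs _ ≤ |ρ x - ρ y| + ρ y * (|φ| * |x - y|) := hstep
        _ ≤ |x - y| * (3 * d) + 2 * Real.pi * d * |x - y| := by
            have := hρlip x y; linarith
    have hdists : dist (γ x) (γ y) ≤ Complex.abs (Z x - Z y) + Complex.abs (W x - W y) := by
      have h := dist_le_abs_add (γ x) (γ y)
      rw [hzγ x, hzγ y, hwγ x, hwγ y] at h
      exact h
    have hπ : Real.pi < 3.15 := Real.pi_lt_d2
    nlinarith [abs_nonneg (x - y), hd.le, hdists, hZxy, hWxy,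
      mul_le_mul_of_nonneg_right (mul_le_mul_of_nonneg_left hπ.le (by norm_num : (0:ℝ) ≤ 2))
        (mul_nonneg hd.le (abs_nonneg (x - y))),
      mul_nonneg hd.le (abs_nonneg (x - y))]
  have hlip : LipschitzOnWith (12 * d).toNNReal γ (Icc 0 1) := by
    rw [lipschitzOnWith_iff_dist_le_mul]
    intro x hx y hy
    have hcoe : (((12 * d).toNNReal : NNReal) : ℝ) = 12 * d :=
      Real.coe_toNNReal _ (by positivity)
    rw [hcoe, Real.dist_eq]
    exact hγlip x hx y hy
  have hvar : eVariationOn γ (Icc 0 1) ≤ ENNReal.ofReal (12 * d) := by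
    have h1 : eVariationOn (γ ∘ id) (Icc (0:ℝ) 1)
        ≤ ((12 * d).toNNReal : ENNReal) * eVariationOn id (Icc (0:ℝ) 1) :=
      hlip.comp_eVariationOn_le (mapsTo_id _)
    have h2 : eVariationOn (id : ℝ → ℝ) (Icc (0:ℝ) 1) ≤ ENNReal.ofReal 1 := by
      have h3 := (monotoneOn_id (s := Icc (0:ℝ) 1)).eVariationOn_le
        (left_mem_Icc.2 (by norm_num)) (right_mem_Icc.2 (by norm_num))
      rw [inter_self] at h3
      simpa using h3
    calc eVariationOn γ (Icc (0:ℝ) 1) = eVariationOn (γ ∘ id) (Icc (0:ℝ) 1) := rfl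
      _ ≤ ((12 * d).toNNReal : ENNReal) * eVariationOn id (Icc (0:ℝ) 1) := h1
      _ ≤ ((12 * d).toNNReal : ENNReal) * ENNReal.ofReal 1 := by
          exact mul_le_mul_right h2 _
      _ = ENNReal.ofReal (12 * d) := by
          rw [ENNReal.ofReal_one, mul_one]; rfl
  -- the cigar condition
  have hcig : ∀ t ∈ Icc (0:ℝ) 1,
      min (dist (γ t) p₁) (dist (γ t) p₂)
        ≤ 12 * Metric.infDist (γ t) (frontier HartogsInf) := by
    intro t ht
    obtain ⟨ht0, ht1⟩ := ht
    have hI0 : 0 ≤ Metric.infDist (γ t) (frontier HartogsInf) := Metric.infDist_nonneg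
    have hs2 : Real.sqrt 2 ≤ 1.5 := by
      nlinarith [Real.sq_sqrt (by norm_num : (0:ℝ) ≤ 2), Real.sqrt_nonneg 2]
    have hπ : Real.pi < 3.15 := Real.pi_lt_d2
    have hInft := hInf t ⟨ht0, ht1⟩
    rcases le_total t (1/2) with hth | hth
    · have hmin : min t (1 - t) = t := min_eq_left (by linarith)
      rw [hmin] at hInft
      have hZd : Complex.abs (Z t - z₁) ≤ t * d := by
        have h1 : Z t - z₁ = ((t : ℝ) : ℂ) * (z₂ - z₁) := by
          simp only [hZdef]; push_cast; ring
        rw [h1, map_mul, Complex.abs_ofReal, abs_of_nonneg ht0]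
        apply mul_le_mul_of_nonneg_left _ ht0
        rw [← neg_sub, Complex.abs.map_neg]; exact hdz
      have hEt1 : Complex.abs (Ee t - 1) ≤ |φ| * t := by
        simp only [hEdef]
        calc Complex.abs _ ≤ |φ * t| := abs_exp_mul_I_sub_one_le (φ * t)
          _ = |φ| * t := by rw [abs_mul, abs_of_nonneg ht0]
      have hρt : |ρ t - b₁| ≤ t * (3 * d) := by
        have h2 : ρ t - b₁ = t * (b₂ - b₁) + 2 * d * t := by
          simp only [hρdef, hmin]; ring
        rw [h2]
        have h3 : |b₂ - b₁| ≤ d := by rw [abs_sub_comm]; exact hΔr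
        calc |t * (b₂ - b₁) + 2 * d * t| ≤ |t * (b₂ - b₁)| + |2 * d * t| := abs_add_le _ _
          _ ≤ t * d + 2 * d * t := by
              rw [abs_mul, abs_of_nonneg ht0, abs_of_nonneg (by positivity : (0:ℝ) ≤ 2 * d * t)]
              nlinarith
          _ = t * (3 * d) := by ring
      have hWd : Complex.abs (W t - w₁) ≤ t * (3 * d) + t * (Real.pi * d) := by
        have h1 : W t - w₁
            = u * ((((ρ t - b₁ : ℝ) : ℂ)) * Ee t + ((b₁ : ℝ) : ℂ) * (Ee t - 1)) := by
          rw [← hw₁u]; simp only [hWdef]; push_cast; ring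
        rw [h1, map_mul, hu1, one_mul]
        have hEab : Complex.abs (Ee t) = 1 := by
          simp only [hEdef]; exact Complex.abs_exp_ofReal_mul_I _
        calc Complex.abs _
            ≤ Complex.abs ((((ρ t - b₁ : ℝ) : ℂ)) * Ee t)
              + Complex.abs (((b₁ : ℝ) : ℂ) * (Ee t - 1)) := Complex.abs.add_le _ _
          _ ≤ |ρ t - b₁| + b₁ * (|φ| * t) := by
              rw [map_mul, map_mul, Complex.abs_ofReal, Complex.abs_ofReal, hEab, mul_one,
                abs_of_pos hb₁]
              have := mul_le_mul_of_nonneg_left hEt1 hb₁.le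
              linarith
          _ ≤ t * (3 * d) + t * (Real.pi * d) := by
              have h4 : b₁ * (|φ| * t) = (b₁ * |φ|) * t := by ring
              have h5 : (b₁ * |φ|) * t ≤ (Real.pi * d) * t :=
                mul_le_mul_of_nonneg_right hφ1 ht0
              nlinarith [hρt]
      have hdist1 : dist (γ t) p₁ ≤ t * (4 * d) + t * (Real.pi * d) := by
        have h := dist_le_abs_add (γ t) p₁
        rw [hzγ t, hwγ t] at h
        rw [← hz₁, ← hw₁] at h
        nlinarith [hZd, hWd, h]
      have h5 : min (dist (γ t) p₁) (dist (γ t) p₂) ≤ dist (γ t) p₁ := min_le_left _ _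
      nlinarith [hInft, mul_le_mul_of_nonneg_right hs2 hI0,
        mul_le_mul_of_nonneg_right hπ.le (mul_nonneg hd.le ht0),
        mul_nonneg hd.le ht0, hI0, hdist1, h5]
    · have hmin : min t (1 - t) = 1 - t := min_eq_right (by linarith)
      rw [hmin] at hInft
      have h1t : (0:ℝ) ≤ 1 - t := by linarith
      have hZd : Complex.abs (Z t - z₂) ≤ (1 - t) * d := by
        have h1 : Z t - z₂ = ((1 - t : ℝ) : ℂ) * (z₁ - z₂) := by
          simp only [hZdef]; push_cast; ring
        rw [h1, map_mul, Complex.abs_ofReal, abs_of_nonneg h1t]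
        exact mul_le_mul_of_nonneg_left hdz h1t
      have hEt1 : Complex.abs (Ee t - Ee 1) ≤ |φ| * (1 - t) := by
        simp only [hEdef]
        calc Complex.abs _ ≤ |φ * t - φ * 1| := abs_exp_sub_exp (φ * t) (φ * 1)
          _ = |φ| * (1 - t) := by
              rw [show φ * t - φ * 1 = φ * (-(1 - t)) from by ring, abs_mul, abs_neg,
                abs_of_nonneg h1t]
      have hρt : |ρ t - b₂| ≤ (1 - t) * (3 * d) := by
        have h2 : ρ t - b₂ = (1 - t) * (b₁ - b₂) + 2 * d * (1 - t) := by
          simp only [hρdef, hmin]; ring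
        rw [h2]
        calc |(1 - t) * (b₁ - b₂) + 2 * d * (1 - t)|
            ≤ |(1 - t) * (b₁ - b₂)| + |2 * d * (1 - t)| := abs_add_le _ _
          _ ≤ (1 - t) * d + 2 * d * (1 - t) := by
              rw [abs_mul, abs_of_nonneg h1t,
                abs_of_nonneg (by positivity : (0:ℝ) ≤ 2 * d * (1 - t))]
              nlinarith [hΔr]
          _ = (1 - t) * (3 * d) := by ring
      have hWd : Complex.abs (W t - w₂) ≤ (1 - t) * (3 * d) + (1 - t) * (Real.pi * d) := by
        have h1 : W t - w₂
            = u * ((((ρ t - b₂ : ℝ) : ℂ)) * Ee t + ((b₂ : ℝ) : ℂ) * (Ee t - Ee 1)) := by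
          rw [← hw₂u]; simp only [hWdef]; push_cast; ring
        rw [h1, map_mul, hu1, one_mul]
        have hEab : Complex.abs (Ee t) = 1 := by
          simp only [hEdef]; exact Complex.abs_exp_ofReal_mul_I _
        calc Complex.abs _
            ≤ Complex.abs ((((ρ t - b₂ : ℝ) : ℂ)) * Ee t)
              + Complex.abs (((b₂ : ℝ) : ℂ) * (Ee t - Ee 1)) := Complex.abs.add_le _ _
          _ ≤ |ρ t - b₂| + b₂ * (|φ| * (1 - t)) := by
              rw [map_mul, map_mul, Complex.abs_ofReal, Complex.abs_ofReal, hEab, mul_one,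
                abs_of_pos hb₂]
              have := mul_le_mul_of_nonneg_left hEt1 hb₂.le
              linarith
          _ ≤ (1 - t) * (3 * d) + (1 - t) * (Real.pi * d) := by
              have h5 : (b₂ * |φ|) * (1 - t) ≤ (Real.pi * d) * (1 - t) :=
                mul_le_mul_of_nonneg_right hφ2 h1t
              nlinarith [hρt]
      have hdist2 : dist (γ t) p₂ ≤ (1 - t) * (4 * d) + (1 - t) * (Real.pi * d) := by
        have h := dist_le_abs_add (γ t) p₂
        rw [hzγ t, hwγ t] at h
        rw [← hz₂, ← hw₂] at h
        nlinarith [hZd, hWd, h]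
      have h5 : min (dist (γ t) p₁) (dist (γ t) p₂) ≤ dist (γ t) p₂ := min_le_right _ _
      nlinarith [hInft, mul_le_mul_of_nonneg_right hs2 hI0,
        mul_le_mul_of_nonneg_right hπ.le (mul_nonneg hd.le h1t),
        mul_nonneg hd.le h1t, hI0, hdist2, h5]
  exact ⟨γ, hlip.continuousOn, hγ0, hγ1, hmem, hvar, hcig⟩
end
end

section
/- Let 𝕋_∞ = {(z,w) ∈ ℂ² : |z| < |w|} and let σ denote the 3-dimensional Hausdorff measure on ℂ² ≅ ℝ⁴. Then the function (ρ, p) ↦ σ(B_ρ(p) ∩ b𝕋_∞) is jointly continuous in ρ ≥ 0 and p ∈ b𝕋_∞, where B_ρ(p) is the open Euclidean ball of radius ρ about p and b𝕋_∞ is the boundary of 𝕋_∞. -/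
open MeasureTheory Set

noncomputable section

open scoped ENNReal NNReal

lemma zCoord_re (x : E4) : (zCoord x).re = x 0 := by simp [zCoord]
lemma zCoord_im (x : E4) : (zCoord x).im = x 1 := by simp [zCoord]
lemma wCoord_re (x : E4) : (wCoord x).re = x 2 := by simp [wCoord]
lemma wCoord_im (x : E4) : (wCoord x).im = x 3 := by simp [wCoord]

def cone : Set E4 := {x | ‖zCoord x‖ = ‖wCoord x‖}

lemma continuous_zabs : Continuous fun x : E4 => ‖zCoord x‖ := by
  apply continuous_norm.comp
  exact ((Complex.continuous_ofReal.comp (EuclideanSpace.proj (0:Fin 4)).continuous).add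
    ((Complex.continuous_ofReal.comp (EuclideanSpace.proj (1:Fin 4)).continuous).mul continuous_const))

lemma continuous_wabs : Continuous fun x : E4 => ‖wCoord x‖ := by
  apply continuous_norm.comp
  exact ((Complex.continuous_ofReal.comp (EuclideanSpace.proj (2:Fin 4)).continuous).add
    ((Complex.continuous_ofReal.comp (EuclideanSpace.proj (3:Fin 4)).continuous).mul continuous_const))

lemma frontier_subset_cone : frontier HartogsInf ⊆ cone := by
  intro x hx
  have h1 : x ∈ closure HartogsInf := hx.1
  have h2 : x ∉ interior HartogsInf := hx.2
  have hle : ‖zCoord x‖ ≤ ‖wCoord x‖ := by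
    have : closure HartogsInf ⊆ {x : E4 | ‖zCoord x‖ ≤ ‖wCoord x‖} :=
      closure_minimal (fun y hy => le_of_lt (show ‖zCoord y‖ < ‖wCoord y‖ from hy)) (isClosed_le continuous_zabs continuous_wabs)
    exact this h1
  have hge : ¬ ‖zCoord x‖ < ‖wCoord x‖ := by
    intro hlt
    have hopen : IsOpen HartogsInf := isOpen_lt continuous_zabs continuous_wabs
    exact h2 (by rwa [hopen.interior_eq])
  exact le_antisymm hle (not_lt.1 hge)

def Phi (v : Fin 3 → ℝ) : E4 :=
  (WithLp.equiv 2 (Fin 4 → ℝ)).symm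
    ![v 0 * Real.cos (v 1), v 0 * Real.sin (v 1), v 0 * Real.cos (v 2), v 0 * Real.sin (v 2)]

lemma Phi_0 (v : Fin 3 → ℝ) : Phi v 0 = v 0 * Real.cos (v 1) := rfl
lemma Phi_1 (v : Fin 3 → ℝ) : Phi v 1 = v 0 * Real.sin (v 1) := rfl
lemma Phi_2 (v : Fin 3 → ℝ) : Phi v 2 = v 0 * Real.cos (v 2) := rfl
lemma Phi_3 (v : Fin 3 → ℝ) : Phi v 3 = v 0 * Real.sin (v 2) := rfl

lemma lipschitz_cos : LipschitzWith 1 Real.cos := by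
  apply lipschitzWith_of_nnnorm_deriv_le Real.differentiable_cos
  intro x
  rw [Real.deriv_cos]
  simpa [← NNReal.coe_le_coe] using Real.abs_sin_le_one x

lemma lipschitz_sin : LipschitzWith 1 Real.sin := by
  apply lipschitzWith_of_nnnorm_deriv_le Real.differentiable_sin
  intro x
  rw [Real.deriv_sin]
  simpa [← NNReal.coe_le_coe] using Real.abs_cos_le_one x

lemma comp_bound {g : ℝ → ℝ} (hg1 : ∀ x, |g x| ≤ 1) (hg2 : LipschitzWith 1 g)
    {a b t s M D : ℝ} (hb : |b| ≤ M) (h1 : |a - b| ≤ D) (h2 : |t - s| ≤ D) (hD : 0 ≤ D) :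
    |a * g t - b * g s| ≤ (1 + M) * D := by
  have hM : 0 ≤ M := le_trans (abs_nonneg b) hb
  have key : a * g t - b * g s = (a - b) * g t + b * (g t - g s) := by ring
  have hgl : |g t - g s| ≤ |t - s| := by
    have := hg2.dist_le_mul t s
    simpa [Real.dist_eq] using this
  calc |a * g t - b * g s| = |(a - b) * g t + b * (g t - g s)| := by rw [key]
    _ ≤ |(a - b) * g t| + |b * (g t - g s)| := abs_add_le _ _
    _ = |a - b| * |g t| + |b| * |g t - g s| := by rw [abs_mul, abs_mul]
    _ ≤ D * 1 + M * D := by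
        gcongr
        exact hg1 t
        exact le_trans hgl h2
    _ = (1 + M) * D := by ring

lemma phi_lipschitzOn {M : ℝ} (hM : 0 ≤ M) :
    LipschitzOnWith (Real.toNNReal (2 * (1 + M))) Phi (Metric.closedBall 0 M) := by
  apply LipschitzOnWith.of_dist_le_mul
  intro v hv w hw
  set D := dist v w with hD
  have hD0 : 0 ≤ D := dist_nonneg
  have hcoord : ∀ u : Fin 3 → ℝ, u ∈ Metric.closedBall (0 : Fin 3 → ℝ) M → ∀ i, |u i| ≤ M := by
    intro u hu i
    have h1 : dist (u i) ((0 : Fin 3 → ℝ) i) ≤ dist u 0 := dist_le_pi_dist u 0 i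
    have h2 : dist u 0 ≤ M := Metric.mem_closedBall.1 hu
    simpa [Real.dist_eq] using le_trans h1 h2
  have hdiff : ∀ i, |v i - w i| ≤ D := by
    intro i
    have := dist_le_pi_dist v w i
    simpa [Real.dist_eq] using this
  have hw0 : |w 0| ≤ M := hcoord w hw 0
  have c1 : |v 0 * Real.cos (v 1) - w 0 * Real.cos (w 1)| ≤ (1 + M) * D :=
    comp_bound Real.abs_cos_le_one lipschitz_cos hw0 (hdiff 0) (hdiff 1) hD0
  have c2 : |v 0 * Real.sin (v 1) - w 0 * Real.sin (w 1)| ≤ (1 + M) * D :=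
    comp_bound Real.abs_sin_le_one lipschitz_sin hw0 (hdiff 0) (hdiff 1) hD0
  have c3 : |v 0 * Real.cos (v 2) - w 0 * Real.cos (w 2)| ≤ (1 + M) * D :=
    comp_bound Real.abs_cos_le_one lipschitz_cos hw0 (hdiff 0) (hdiff 2) hD0
  have c4 : |v 0 * Real.sin (v 2) - w 0 * Real.sin (w 2)| ≤ (1 + M) * D :=
    comp_bound Real.abs_sin_le_one lipschitz_sin hw0 (hdiff 0) (hdiff 2) hD0
  have hdist : dist (Phi v) (Phi w) = Real.sqrt (∑ i, dist (Phi v i) (Phi w i) ^ 2) :=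
    EuclideanSpace.dist_eq (Phi v) (Phi w)
  have hsum : (∑ i, dist (Phi v i) (Phi w i) ^ 2) ≤ (2 * ((1 + M) * D)) ^ 2 := by
    rw [Fin.sum_univ_four]
    simp only [Phi_0, Phi_1, Phi_2, Phi_3, Real.dist_eq]
    nlinarith [abs_nonneg (v 0 * Real.cos (v 1) - w 0 * Real.cos (w 1)),
      abs_nonneg (v 0 * Real.sin (v 1) - w 0 * Real.sin (w 1)),
      abs_nonneg (v 0 * Real.cos (v 2) - w 0 * Real.cos (w 2)),
      abs_nonneg (v 0 * Real.sin (v 2) - w 0 * Real.sin (w 2)),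
      sq_abs (v 0 * Real.cos (v 1) - w 0 * Real.cos (w 1)),
      sq_abs (v 0 * Real.sin (v 1) - w 0 * Real.sin (w 1)),
      sq_abs (v 0 * Real.cos (v 2) - w 0 * Real.cos (w 2)),
      sq_abs (v 0 * Real.sin (v 2) - w 0 * Real.sin (w 2)),
      mul_nonneg (by linarith : (0:ℝ) ≤ 1 + M) hD0]
  have h2c : (0:ℝ) ≤ 2 * ((1 + M) * D) := by positivity
  calc dist (Phi v) (Phi w) ≤ Real.sqrt ((2 * ((1 + M) * D)) ^ 2) := by
        rw [hdist]; exact Real.sqrt_le_sqrt hsum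
    _ = 2 * ((1 + M) * D) := Real.sqrt_sq h2c
    _ ≤ (Real.toNNReal (2 * (1 + M)) : ℝ) * D := by
        rw [Real.coe_toNNReal _ (by linarith)]
        ring_nf
        exact le_refl _

lemma abs_mul_cos (z : ℂ) : ‖z‖ * Real.cos z.arg = z.re := by
  have := congrArg Complex.re (Complex.norm_mul_cos_add_sin_mul_I z)
  simpa [-Complex.norm_mul_cos_add_sin_mul_I] using this
lemma abs_mul_sin (z : ℂ) : ‖z‖ * Real.sin z.arg = z.im := by
  have := congrArg Complex.im (Complex.norm_mul_cos_add_sin_mul_I z)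
  simpa [-Complex.norm_mul_cos_add_sin_mul_I] using this

lemma zabs_le_norm (x : E4) : ‖zCoord x‖ ≤ ‖x‖ := by
  rw [EuclideanSpace.norm_eq, Complex.norm_def, Complex.normSq_apply, zCoord_re, zCoord_im]
  apply Real.sqrt_le_sqrt
  rw [Fin.sum_univ_four]
  simp only [Real.norm_eq_abs, sq_abs]
  nlinarith [sq_nonneg (x 2), sq_nonneg (x 3), sq_nonneg (x 0), sq_nonneg (x 1)]

lemma cone_cover {M : ℝ} (hM : Real.pi ≤ M) {x : E4} (hx : x ∈ cone) (hxM : ‖x‖ ≤ M) :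
    x ∈ Phi '' (Metric.closedBall 0 M) := by
  set z := zCoord x with hz
  set w := wCoord x with hw
  have hM0 : 0 ≤ M := le_trans Real.pi_pos.le hM
  refine ⟨![‖z‖, z.arg, w.arg], ?_, ?_⟩
  · rw [Metric.mem_closedBall, dist_zero_right]
    rw [pi_norm_le_iff_of_nonneg hM0]
    intro i
    fin_cases i
    · simpa [Real.norm_eq_abs, abs_of_nonneg (norm_nonneg z)] using
        le_trans (zabs_le_norm x) hxM
    · simpa [Real.norm_eq_abs] using le_trans (Complex.abs_arg_le_pi z) hM
    · simpa [Real.norm_eq_abs] using le_trans (Complex.abs_arg_le_pi w) hM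
  · have habs : ‖z‖ = ‖w‖ := hx
    ext i
    fin_cases i
    · show ‖z‖ * Real.cos z.arg = x 0
      rw [abs_mul_cos, zCoord_re]
    · show ‖z‖ * Real.sin z.arg = x 1
      rw [abs_mul_sin, zCoord_im]
    · show ‖z‖ * Real.cos w.arg = x 2
      rw [habs, abs_mul_cos, wCoord_re]
    · show ‖z‖ * Real.sin w.arg = x 3
      rw [habs, abs_mul_sin, wCoord_im]

lemma quad_roots_subset (b d : ℝ) :
    {r : ℝ | 2 * r ^ 2 + b * r + d = 0} ⊆
      {(-b + Real.sqrt (b ^ 2 - 8 * d)) / 4, (-b - Real.sqrt (b ^ 2 - 8 * d)) / 4} := by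
  intro r hr
  have hr' : 2 * r ^ 2 + b * r + d = 0 := hr
  have hsq : (4 * r + b) ^ 2 = b ^ 2 - 8 * d := by nlinarith
  have habs : |4 * r + b| = Real.sqrt (b ^ 2 - 8 * d) := by
    rw [← hsq, Real.sqrt_sq_eq_abs]
  rcases abs_cases (4 * r + b) with ⟨h1, _⟩ | ⟨h1, _⟩
  · left
    rw [h1] at habs
    show r = _
    field_simp
    linarith
  · right
    rw [h1] at habs
    show r = _
    field_simp
    linarith

/-- The zero set of the quadratic-in-`r` function is Lebesgue-null in `Fin 3 → ℝ`. -/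
lemma volume_quad_zero (c : ℝ → ℝ → ℝ) (hc : Continuous fun q : ℝ × ℝ => c q.1 q.2) (d : ℝ) :
    volume {v : Fin 3 → ℝ | 2 * (v 0) ^ 2 + c (v 1) (v 2) * (v 0) + d = 0} = 0 := by
  set B : Set ((Fin 2 → ℝ) × ℝ) := {q | 2 * q.2 ^ 2 + c (q.1 0) (q.1 1) * q.2 + d = 0} with hB
  have hBmeas : MeasurableSet B := by
    have hcont : Continuous fun q : (Fin 2 → ℝ) × ℝ =>
        2 * q.2 ^ 2 + c (q.1 0) (q.1 1) * q.2 + d :=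
      ((continuous_const.mul (continuous_snd.pow 2)).add
        ((Continuous.comp (g := fun q : ℝ × ℝ => c q.1 q.2)
          (f := fun q : (Fin 2 → ℝ) × ℝ => (q.1 0, q.1 1)) hc (by fun_prop) :
            Continuous fun q : (Fin 2 → ℝ) × ℝ => c (q.1 0) (q.1 1)).mul continuous_snd)).add
        continuous_const
    exact (isClosed_eq hcont continuous_const).measurableSet
  have hBnull : (volume : Measure ((Fin 2 → ℝ) × ℝ)) B = 0 := by
    rw [Measure.volume_eq_prod, Measure.measure_prod_null hBmeas]
    filter_upwards with y
    have hsub : (Prod.mk y ⁻¹' B) ⊆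
        {(-(c (y 0) (y 1)) + Real.sqrt ((c (y 0) (y 1)) ^ 2 - 8 * d)) / 4,
         (-(c (y 0) (y 1)) - Real.sqrt ((c (y 0) (y 1)) ^ 2 - 8 * d)) / 4} := by
      intro r hr
      exact quad_roots_subset (c (y 0) (y 1)) d (by simpa [B] using hr)
    have : volume (Prod.mk y ⁻¹' B) = 0 := by
      refine le_antisymm (le_trans (measure_mono hsub) ?_) (zero_le)
      exact le_of_eq (((Set.finite_singleton _).insert _).measure_zero _)
    exact this
  -- transfer to `Fin 3 → ℝ`
  set e := MeasurableEquiv.piFinSuccAbove (fun _ : Fin 3 => ℝ) 0 with he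
  have hswapB : MeasurableSet (Prod.swap ⁻¹' B : Set (ℝ × (Fin 2 → ℝ))) :=
    hBmeas.preimage measurable_swap
  have he1 : ∀ v : Fin 3 → ℝ, (e v).1 = v 0 := by
    intro v; simp [e, MeasurableEquiv.piFinSuccAbove]
  have he2 : ∀ v : Fin 3 → ℝ, (e v).2 0 = v 1 := by
    intro v; simp [e, MeasurableEquiv.piFinSuccAbove, Fin.removeNth, Fin.tail]
  have he3 : ∀ v : Fin 3 → ℝ, (e v).2 1 = v 2 := by
    intro v; simp [e, MeasurableEquiv.piFinSuccAbove, Fin.removeNth, Fin.tail]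
  have hA : {v : Fin 3 → ℝ | 2 * (v 0) ^ 2 + c (v 1) (v 2) * (v 0) + d = 0}
      = e ⁻¹' (Prod.swap ⁻¹' B) := by
    ext v
    have : (Prod.swap (e v) ∈ B) ↔
        (2 * ((e v).1) ^ 2 + c ((e v).2 0) ((e v).2 1) * ((e v).1) + d = 0) := Iff.rfl
    simp only [mem_setOf_eq, mem_preimage, this, he1, he2, he3]
  rw [hA]
  have hpres := MeasureTheory.volume_preserving_piFinSuccAbove (fun _ : Fin 3 => ℝ) 0
  rw [hpres.measure_preimage hswapB.nullMeasurableSet]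
  have : (volume : Measure (ℝ × (Fin 2 → ℝ))) (Prod.swap ⁻¹' B) = 0 := by
    rw [Measure.volume_eq_prod, ← Measure.map_apply measurable_swap hBmeas, Measure.prod_swap]
    rw [Measure.volume_eq_prod] at hBnull
    exact hBnull
  exact this


lemma hausdorff3_pi : (μH[3] : Measure (Fin 3 → ℝ)) = volume := by
  simpa using (MeasureTheory.hausdorffMeasure_pi_real (ι := Fin 3))

lemma image_measure_bound {M : ℝ} (hM : 0 ≤ M) {s : Set (Fin 3 → ℝ)}
    (hs : s ⊆ Metric.closedBall 0 M) :
    μH[3] (Phi '' s) ≤ ((Real.toNNReal (2 * (1 + M)) : ℝ≥0∞) ^ (3:ℝ)) * volume s := by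
  have h := ((phi_lipschitzOn hM).mono hs).hausdorffMeasure_image_le (by norm_num : (0:ℝ) ≤ 3)
  rwa [hausdorff3_pi] at h

lemma measure_cone_closedBall_ne_top (p : E4) (R : ℝ) :
    μH[3] (cone ∩ Metric.closedBall p R) ≠ ⊤ := by
  set M : ℝ := ‖p‖ + |R| + 4 with hM
  have hM0 : (0:ℝ) ≤ M := by positivity
  have hπ : Real.pi ≤ M := by
    have := Real.pi_le_four
    have : Real.pi ≤ 4 := Real.pi_le_four
    have h1 : (0:ℝ) ≤ ‖p‖ + |R| := by positivity
    linarith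
  have hsub : cone ∩ Metric.closedBall p R ⊆ Phi '' (Metric.closedBall 0 M) := by
    rintro x ⟨hx1, hx2⟩
    apply cone_cover hπ hx1
    have h1 : dist x p ≤ R := Metric.mem_closedBall.1 hx2
    have h2 : ‖x‖ ≤ dist x p + ‖p‖ := by
      have := dist_triangle x p 0
      simpa [dist_zero_right] using this
    have : R ≤ |R| := le_abs_self R
    linarith
  refine ne_top_of_le_ne_top ?_ (measure_mono hsub |>.trans (image_measure_bound hM0 (subset_refl _)))
  apply ENNReal.mul_ne_top
  · exact (ENNReal.rpow_lt_top_of_nonneg (by norm_num) ENNReal.coe_ne_top).ne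
  · exact (measure_closedBall_lt_top).ne

lemma measure_cone_sphere_zero (p : E4) (ρ : ℝ) :
    μH[3] (cone ∩ Metric.sphere p ρ) = 0 := by
  set M : ℝ := ‖p‖ + |ρ| + 4 with hM
  have hM0 : (0:ℝ) ≤ M := by positivity
  have hπ : Real.pi ≤ M := by
    have : Real.pi ≤ 4 := Real.pi_le_four
    have h1 : (0:ℝ) ≤ ‖p‖ + |ρ| := by positivity
    linarith
  set c : ℝ → ℝ → ℝ := fun θ φ =>
    -(2 * (p 0 * Real.cos θ + p 1 * Real.sin θ + p 2 * Real.cos φ + p 3 * Real.sin φ)) with hc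
  have hccont : Continuous fun q : ℝ × ℝ => c q.1 q.2 := by
    apply Continuous.neg
    apply Continuous.mul continuous_const
    exact (((continuous_const.mul (Real.continuous_cos.comp continuous_fst)).add
      (continuous_const.mul (Real.continuous_sin.comp continuous_fst))).add
      (continuous_const.mul (Real.continuous_cos.comp continuous_snd))).add
      (continuous_const.mul (Real.continuous_sin.comp continuous_snd))
  set d : ℝ := (p 0 ^ 2 + p 1 ^ 2 + p 2 ^ 2 + p 3 ^ 2) - ρ ^ 2 with hd
  have hquad : ∀ v : Fin 3 → ℝ, Phi v ∈ Metric.sphere p ρ →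
      2 * (v 0) ^ 2 + c (v 1) (v 2) * (v 0) + d = 0 := by
    intro v hv
    have hdist : dist (Phi v) p = ρ := Metric.mem_sphere.1 hv
    have hQ : dist (Phi v) p = Real.sqrt (∑ i, dist (Phi v i) (p i) ^ 2) :=
      EuclideanSpace.dist_eq (Phi v) p
    have hQ0 : 0 ≤ ∑ i, dist (Phi v i) (p i) ^ 2 := by positivity
    have hρQ : ρ ^ 2 = ∑ i, dist (Phi v i) (p i) ^ 2 := by
      rw [← hdist, hQ, Real.sq_sqrt hQ0]
    have hexp : (∑ i, dist (Phi v i) (p i) ^ 2)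
        = 2 * (v 0) ^ 2 + c (v 1) (v 2) * (v 0) + (p 0 ^ 2 + p 1 ^ 2 + p 2 ^ 2 + p 3 ^ 2) := by
      rw [Fin.sum_univ_four]
      simp only [Real.dist_eq, sq_abs, Phi_0, Phi_1, Phi_2, Phi_3, hc]
      linear_combination (v 0) ^ 2 * Real.sin_sq_add_cos_sq (v 1)
        + (v 0) ^ 2 * Real.sin_sq_add_cos_sq (v 2)
    rw [hd]
    rw [hexp] at hρQ
    linarith
  have hsub : cone ∩ Metric.sphere p ρ ⊆
      Phi '' (Metric.closedBall 0 M ∩ Phi ⁻¹' (Metric.sphere p ρ)) := by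
    rintro x ⟨hx1, hx2⟩
    have hxM : ‖x‖ ≤ M := by
      have h1 : dist x p = ρ := Metric.mem_sphere.1 hx2
      have h2 : ‖x‖ ≤ dist x p + ‖p‖ := by
        have := dist_triangle x p 0
        simpa [dist_zero_right] using this
      have : ρ ≤ |ρ| := le_abs_self ρ
      rw [h1] at h2
      linarith
    obtain ⟨v, hv, rfl⟩ := cone_cover hπ hx1 hxM
    exact ⟨v, ⟨hv, hx2⟩, rfl⟩
  have hbound := image_measure_bound hM0
    (inter_subset_left : Metric.closedBall 0 M ∩ Phi ⁻¹' (Metric.sphere p ρ) ⊆ _)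
  have hnull : volume (Metric.closedBall 0 M ∩ Phi ⁻¹' (Metric.sphere p ρ)) = 0 := by
    have hsub2 : Metric.closedBall 0 M ∩ Phi ⁻¹' (Metric.sphere p ρ) ⊆
        {v : Fin 3 → ℝ | 2 * (v 0) ^ 2 + c (v 1) (v 2) * (v 0) + d = 0} := by
      rintro v ⟨_, hv⟩
      exact hquad v hv
    exact le_antisymm ((measure_mono hsub2).trans (volume_quad_zero c hccont d).le) (zero_le)
  refine le_antisymm ?_ (zero_le)
  calc μH[3] (cone ∩ Metric.sphere p ρ) ≤ μH[3] (Phi '' (Metric.closedBall 0 M ∩ Phi ⁻¹' (Metric.sphere p ρ))) := measure_mono hsub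
    _ ≤ _ := hbound
    _ = 0 := by rw [hnull, mul_zero]


set_option maxHeartbeats 1000000 in
/-- **Continuity of the boundary measure of balls** (Lemma 2.7): the function
`(ρ, p) ↦ σ(B_ρ(p) ∩ b𝕋_∞)` is jointly continuous in `ρ ≥ 0` and `p ∈ b𝕋_∞`,
where `σ = μH[3]` is the 3-dimensional Hausdorff measure on `ℂ² ≅ ℝ⁴`. -/
theorem hausdorff_measure_ball_inter_boundary_continuous :
    ContinuousOn
      (fun q : ℝ × E4 => μH[3] (Metric.ball q.2 q.1 ∩ frontier HartogsInf))
      (Ici (0:ℝ) ×ˢ frontier HartogsInf) := by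
  set S := frontier HartogsInf with hS
  have hcont : Continuous fun q : ℝ × E4 => μH[3] (Metric.ball q.2 q.1 ∩ S) := by
    rw [continuous_iff_continuousAt]
    rintro ⟨ρ₀, p₀⟩
    have hmono : ∀ {s t : ℝ}, s ≤ t →
        μH[3] (Metric.ball p₀ s ∩ S) ≤ μH[3] (Metric.ball p₀ t ∩ S) := fun h =>
      measure_mono (inter_subset_inter_left _ (Metric.ball_subset_ball h))
    have hfin : ∀ t : ℝ, μH[3] (Metric.ball p₀ t ∩ S) ≠ ⊤ := by
      intro t
      refine ne_top_of_le_ne_top (measure_cone_closedBall_ne_top p₀ |t|) (measure_mono ?_)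
      rintro x ⟨hx1, hx2⟩
      exact ⟨frontier_subset_cone hx2,
        Metric.closedBall_subset_closedBall (le_abs_self t) (Metric.ball_subset_closedBall hx1)⟩
    have hsphere : μH[3] (Metric.sphere p₀ ρ₀ ∩ S) = 0 := by
      refine le_antisymm (le_trans (measure_mono ?_) (measure_cone_sphere_zero p₀ ρ₀).le) (zero_le)
      rintro x ⟨hx1, hx2⟩
      exact ⟨frontier_subset_cone hx2, hx1⟩
    have hmeas : ∀ t : ℝ, NullMeasurableSet (Metric.ball p₀ t ∩ S) μH[3] :=
      fun t => (Metric.isOpen_ball.measurableSet.inter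
        isClosed_frontier.measurableSet).nullMeasurableSet
    have hcb : μH[3] (Metric.closedBall p₀ ρ₀ ∩ S) = μH[3] (Metric.ball p₀ ρ₀ ∩ S) := by
      refine le_antisymm ?_ (measure_mono (inter_subset_inter_left _ Metric.ball_subset_closedBall))
      have hsub : Metric.closedBall p₀ ρ₀ ∩ S ⊆
          (Metric.ball p₀ ρ₀ ∩ S) ∪ (Metric.sphere p₀ ρ₀ ∩ S) := by
        rintro x ⟨hx1, hx2⟩
        rcases lt_or_eq_of_le (Metric.mem_closedBall.1 hx1) with h | h
        · exact Or.inl ⟨Metric.mem_ball.2 h, hx2⟩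
        · exact Or.inr ⟨Metric.mem_sphere.2 h, hx2⟩
      refine (measure_mono hsub).trans ((measure_union_le _ _).trans ?_)
      rw [hsphere, add_zero]
    have hupper : Filter.Tendsto (fun n : ℕ => μH[3] (Metric.ball p₀ (ρ₀ + 1 / (n + 1)) ∩ S))
        Filter.atTop (nhds (μH[3] (Metric.ball p₀ ρ₀ ∩ S))) := by
      have hanti : Antitone fun n : ℕ => Metric.ball p₀ (ρ₀ + 1 / (n + 1)) ∩ S := by
        intro a b hab
        refine inter_subset_inter_left _ (Metric.ball_subset_ball ?_)
        have hcast : (a:ℝ) ≤ (b:ℝ) := Nat.cast_le.2 hab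
        have : (1:ℝ) / (b + 1) ≤ 1 / (a + 1) := by
          apply one_div_le_one_div_of_le (by positivity)
          linarith
        linarith
      have h := tendsto_measure_iInter_atTop (μ := μH[3]) (fun n => hmeas _) hanti
        ⟨0, hfin (ρ₀ + 1 / ((0:ℕ) + 1))⟩
      have hiInter : (⋂ n : ℕ, (Metric.ball p₀ (ρ₀ + 1 / (n + 1)) ∩ S))
          = Metric.closedBall p₀ ρ₀ ∩ S := by
        ext x
        simp only [mem_iInter, mem_inter_iff]
        constructor
        · intro h
          refine ⟨Metric.mem_closedBall.2 ?_, (h 0).2⟩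
          by_contra hlt
          push_neg at hlt
          obtain ⟨n, hn⟩ := exists_nat_one_div_lt (by linarith : (0:ℝ) < dist x p₀ - ρ₀)
          have := Metric.mem_ball.1 (h n).1
          linarith
        · rintro ⟨h1, h2⟩ n
          have h1' : dist x p₀ ≤ ρ₀ := Metric.mem_closedBall.1 h1
          have : (0:ℝ) < 1 / ((n:ℝ) + 1) := by positivity
          exact ⟨Metric.mem_ball.2 (by linarith), h2⟩
      rw [hiInter, hcb] at h
      exact h
    have hlower : Filter.Tendsto (fun n : ℕ => μH[3] (Metric.ball p₀ (ρ₀ - 1 / (n + 1)) ∩ S))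
        Filter.atTop (nhds (μH[3] (Metric.ball p₀ ρ₀ ∩ S))) := by
      have hmon : Monotone fun n : ℕ => Metric.ball p₀ (ρ₀ - 1 / (n + 1)) ∩ S := by
        intro a b hab
        refine inter_subset_inter_left _ (Metric.ball_subset_ball ?_)
        have hcast : (a:ℝ) ≤ (b:ℝ) := Nat.cast_le.2 hab
        have : (1:ℝ) / (b + 1) ≤ 1 / (a + 1) := by
          apply one_div_le_one_div_of_le (by positivity)
          linarith
        linarith
      have h := tendsto_measure_iUnion_atTop (μ := μH[3]) hmon
      have hiUnion : (⋃ n : ℕ, (Metric.ball p₀ (ρ₀ - 1 / (n + 1)) ∩ S))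
          = Metric.ball p₀ ρ₀ ∩ S := by
        ext x
        simp only [mem_iUnion, mem_inter_iff]
        constructor
        · rintro ⟨n, h1, h2⟩
          have : (0:ℝ) < 1 / ((n:ℝ) + 1) := by positivity
          have := Metric.mem_ball.1 h1
          exact ⟨Metric.mem_ball.2 (by linarith), h2⟩
        · rintro ⟨h1, h2⟩
          obtain ⟨n, hn⟩ := exists_nat_one_div_lt (by linarith [Metric.mem_ball.1 h1] :
            (0:ℝ) < ρ₀ - dist x p₀)
          exact ⟨n, Metric.mem_ball.2 (by linarith [Metric.mem_ball.1 h1]), h2⟩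
      rw [hiUnion] at h
      exact h
    show Filter.Tendsto _ _ (nhds (μH[3] (Metric.ball p₀ ρ₀ ∩ S)))
    rw [ENNReal.tendsto_nhds (hfin ρ₀)]
    intro ε hε
    have hup : ∀ᶠ n : ℕ in Filter.atTop, μH[3] (Metric.ball p₀ (ρ₀ + 1 / (n + 1)) ∩ S)
        < μH[3] (Metric.ball p₀ ρ₀ ∩ S) + ε :=
      hupper.eventually_lt_const (ENNReal.lt_add_right (hfin ρ₀) hε.ne')
    have hlow : ∀ᶠ n : ℕ in Filter.atTop, μH[3] (Metric.ball p₀ ρ₀ ∩ S) - ε ≤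
        μH[3] (Metric.ball p₀ (ρ₀ - 1 / (n + 1)) ∩ S) := by
      rcases le_or_gt (μH[3] (Metric.ball p₀ ρ₀ ∩ S)) ε with hle | hlt
      · exact Filter.Eventually.of_forall fun n => by simp [tsub_eq_zero_of_le hle]
      · have hne : μH[3] (Metric.ball p₀ ρ₀ ∩ S) ≠ 0 := by
          intro h0
          rw [h0] at hlt
          exact (not_lt.2 (zero_le (a := ε))) hlt
        have hlt' : μH[3] (Metric.ball p₀ ρ₀ ∩ S) - ε < μH[3] (Metric.ball p₀ ρ₀ ∩ S) :=
          ENNReal.sub_lt_self (hfin ρ₀) hne hε.ne'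
        exact (hlower.eventually_const_lt hlt').mono fun n h => h.le
    obtain ⟨n, hn1, hn2⟩ := (hup.and hlow).exists
    set r : ℝ := 1 / ((n:ℝ) + 1) with hr
    have hr0 : 0 < r := by positivity
    filter_upwards [prod_mem_nhds (Metric.ball_mem_nhds ρ₀ (by positivity : (0:ℝ) < r/3))
      (Metric.ball_mem_nhds p₀ (by positivity : (0:ℝ) < r/3))] with q hq
    obtain ⟨hq1, hq2⟩ := hq
    have hq1' : |q.1 - ρ₀| < r / 3 := by
      have := Metric.mem_ball.1 hq1
      rwa [Real.dist_eq] at this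
    have hq2' : dist q.2 p₀ < r / 3 := Metric.mem_ball.1 hq2
    have habs := abs_lt.1 hq1'
    constructor
    · refine le_trans hn2 ?_
      have hsub : Metric.ball p₀ (ρ₀ - r) ⊆ Metric.ball q.2 q.1 := by
        intro x hx
        have hx' := Metric.mem_ball.1 hx
        have htri : dist x q.2 ≤ dist x p₀ + dist p₀ q.2 := dist_triangle x p₀ q.2
        rw [dist_comm p₀ q.2] at htri
        exact Metric.mem_ball.2 (by linarith)
      exact measure_mono (inter_subset_inter_left _ hsub)
    · refine le_trans ?_ hn1.le
      have hsub : Metric.ball q.2 q.1 ⊆ Metric.ball p₀ (ρ₀ + r) := by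
        intro x hx
        have hx' := Metric.mem_ball.1 hx
        have htri : dist x p₀ ≤ dist x q.2 + dist q.2 p₀ := dist_triangle x q.2 p₀
        exact Metric.mem_ball.2 (by linarith)
      exact measure_mono (inter_subset_inter_left _ hsub)
  exact hcont.continuousOn
end
end
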